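/- arXiv:2605.15909 — 6 statements merged into one kernel-verified Lean document; each statement's English description precedes it below -/
import Mathlib

section
/- Let V be a π-graded complex vector space of finite type with inner product ω and dual map σ, and let Ř(u) be an R-matrix on V (satisfying the Yang–Baxter equation and the inversion relation Ř(u)Ř(−u) = Id) that is crossing symmetric with crossing parameter λ and meromorphic function α. Then Ř is rotationally invariant; more precisely, its rotation by 90° satisfies Ř^{*₁}(u) = α(−u)·Ř(u) for generic u ∈ ℂ. -/
/-!
STATEMENT 1: A crossing symmetric R-matrix on a π-graded vector space of finite type
(with inner product ω and dual map σ) is rotationally invariant: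
Ř^{*₁}(u) = α(−u)·Ř(u) for generic u.

π-graded vector spaces of finite type are encoded by a finite basis index type ι with a
degree map deg : ι → Arr C assigning to each basis vector an arrow of the finite groupoid.
Operators are encoded by their matrices in this graded basis; the π-grading of an operator
is the condition that its matrix entries vanish except on commutative squares.
-/

open CategoryTheory
open scoped BigOperators

namespace Stmt1

variable {C : Type} [Groupoid C] [Fintype C] [DecidableEq C]
  [∀ a b : C, Fintype (a ⟶ b)] [∀ a b : C, DecidableEq (a ⟶ b)]

/-- The set of arrows of the groupoid `C`. -/
abbrev Arr (C : Type) [Groupoid C] := Σ a b : C, a ⟶ b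

def src (α : Arr C) : C := α.1
def tgt (α : Arr C) : C := α.2.1
/-- inverse arrow -/
def ainv (α : Arr C) : Arr C := ⟨α.2.1, α.1, Groupoid.inv α.2.2⟩
/-- composition of composable arrows -/
def acomp (α β : Arr C) (h : tgt α = src β) : Arr C :=
  ⟨src α, tgt β, α.2.2 ≫ eqToHom h ≫ β.2.2⟩

/-- `IsSquare i j k l` : the arrows `i,j` (vertically composable) and `k,l` (vertically
composable) form a commutative square, i.e. `j∘i = l∘k` with matching endpoints. -/
def IsSquare (i j k l : Arr C) : Prop :=
  ∃ (h₁ : tgt i = src j) (h₂ : tgt k = src l),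
    src i = src k ∧ tgt j = tgt l ∧ acomp i j h₁ = acomp k l h₂

variable {ι : Type} [Fintype ι] [DecidableEq ι]

/-- A matrix on `V ⊗ V` is a π-graded morphism iff its entries are supported on
commutative squares.  Convention: `R p q` is the matrix element mapping the component
`V_{deg q.1} ⊗ V_{deg q.2}` to `V_{deg p.1} ⊗ V_{deg p.2}`. -/
def GradedR (deg : ι → Arr C) (R : Matrix (ι × ι) (ι × ι) ℂ) : Prop :=
  ∀ p q, R p q ≠ 0 → IsSquare (deg q.1) (deg q.2) (deg p.1) (deg p.2)

/-- R acting on the factors 1,2 of a threefold tensor product. -/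
noncomputable def M12 (R : Matrix (ι × ι) (ι × ι) ℂ) :
    Matrix (ι × ι × ι) (ι × ι × ι) ℂ :=
  fun p q => R (p.1, p.2.1) (q.1, q.2.1) * (if p.2.2 = q.2.2 then 1 else 0)

/-- R acting on the factors 2,3 of a threefold tensor product. -/
noncomputable def M23 (R : Matrix (ι × ι) (ι × ι) ℂ) :
    Matrix (ι × ι × ι) (ι × ι × ι) ℂ :=
  fun p q => (if p.1 = q.1 then 1 else 0) * R (p.2.1, p.2.2) (q.2.1, q.2.2)

/-- the inner product ω contracting the factors 2,3 of a threefold tensor product. -/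
noncomputable def Om23 (ω : ι → ι → ℂ) : Matrix ι (ι × ι × ι) ℂ :=
  fun a q => (if a = q.1 then 1 else 0) * ω q.2.1 q.2.2

/-- the inner product ω contracting the factors 1,2 of a threefold tensor product. -/
noncomputable def Om12 (ω : ι → ι → ℂ) : Matrix ι (ι × ι × ι) ℂ :=
  fun a q => ω q.1 q.2.1 * (if a = q.2.2 then 1 else 0)

/-- the dual map σ inserted in the factors 1,2. -/
noncomputable def Sg12 (σ : ι → ι → ℂ) : Matrix (ι × ι × ι) ι ℂ :=
  fun p a => σ p.1 p.2.1 * (if p.2.2 = a then 1 else 0)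

/-- the dual map σ inserted in the factors 2,3. -/
noncomputable def Sg23 (σ : ι → ι → ℂ) : Matrix (ι × ι × ι) ι ℂ :=
  fun p a => (if p.1 = a then 1 else 0) * σ p.2.1 p.2.2

/-- Rotation by 90°:  Ř^{*₁}(u) = (id⊗id⊗ω)(id⊗Ř(λ−u)⊗id)(σ⊗id⊗id), i.e.
`ω^{(23)} Ř^{(12)}(λ−u) σ^{(01)}` on four tensor slots `0,1,2,3`. -/
noncomputable def rot90 (ω σ : ι → ι → ℂ) (Rm : ℂ → Matrix (ι × ι) (ι × ι) ℂ)
    (lam u : ℂ) : Matrix (ι × ι) (ι × ι) ℂ :=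
  fun p q => ∑ b : ι, ∑ m : ι, σ p.1 b * Rm (lam - u) (p.2, m) (b, q.1) * ω m q.2

/-!
Applying `Ř^{(12)}(u)` to the crossing relation at `−u`, `Ř^{(12)}(−u) Ř^{(23)}(λ−u) σ^{(12)} =
α(−u) σ^{(23)}`, the inversion relation leaves `Ř^{(23)}(λ−u) σ^{(12)} = α(−u) Ř^{(12)}(u) σ^{(23)}`.
Contracting the third factor of both sides with `ω` turns the left side into `Ř^{*₁}(u)` and,
by the zig-zag identity `(id ⊗ ω)(σ ⊗ id) = id`, the right side into `α(−u) Ř(u)`.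
-/

lemma M12_mul (A B : Matrix (ι × ι) (ι × ι) ℂ) :
    M12 A * M12 B = M12 (A * B) := by
  ext p q
  simp only [Matrix.mul_apply, M12, Fintype.sum_prod_type]
  simp [Finset.mul_sum, mul_ite, ite_mul, mul_comm]

lemma M12_mul_eq_one {A B : Matrix (ι × ι) (ι × ι) ℂ} (h : A * B = 1) :
    M12 A * M12 B = 1 := by
  rw [M12_mul, h]
  ext p q
  simp only [M12, Matrix.one_apply, Prod.ext_iff]
  by_cases h1 : p.1 = q.1 <;> by_cases h2 : p.2.1 = q.2.1 <;>
    by_cases h3 : p.2.2 = q.2.2 <;> simp [h1, h2, h3]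

lemma M23_mul_Sg12_apply (S : Matrix (ι × ι) (ι × ι) ℂ) (σ : ι → ι → ℂ) (a b m c : ι) :
    (M23 S * Sg12 σ) (a, b, m) c = ∑ x, σ a x * S (b, m) (x, c) := by
  simp [Matrix.mul_apply, M23, Sg12, Fintype.sum_prod_type, ite_mul, mul_comm]

lemma M12_mul_Sg23_apply (R : Matrix (ι × ι) (ι × ι) ℂ) (σ : ι → ι → ℂ) (a b m c : ι) :
    (M12 R * Sg23 σ) (a, b, m) c = ∑ d, R (a, b) (c, d) * σ d m := by
  simp [Matrix.mul_apply, M12, Sg23, Fintype.sum_prod_type, ite_mul, mul_ite]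

lemma M23_mul_Sg12_eq_smul_of_mul_eq_one {R R' S : Matrix (ι × ι) (ι × ι) ℂ}
    {σ : ι → ι → ℂ} {c : ℂ} (hRR' : R * R' = 1)
    (hcross : M12 R' * M23 S * Sg12 σ = c • Sg23 σ) :
    M23 S * Sg12 σ = c • (M12 R * Sg23 σ) :=
  calc M23 S * Sg12 σ = M12 R * M12 R' * (M23 S * Sg12 σ) := by
        rw [M12_mul_eq_one hRR', Matrix.one_mul]
    _ = M12 R * (M12 R' * M23 S * Sg12 σ) := by simp only [Matrix.mul_assoc]
    _ = c • (M12 R * Sg23 σ) := by rw [hcross, Matrix.mul_smul]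

lemma rot90_eq_smul_of_M23_mul_Sg12_eq {ω σ : ι → ι → ℂ}
    {Rm : ℂ → Matrix (ι × ι) (ι × ι) ℂ} {lam u c : ℂ}
    (hzig : ∀ a c, (∑ b, σ a b * ω b c) = if a = c then (1 : ℂ) else 0)
    (h : M23 (Rm (lam - u)) * Sg12 σ = c • (M12 (Rm u) * Sg23 σ)) :
    rot90 ω σ Rm lam u = c • Rm u := by
  ext ⟨p₁, p₂⟩ ⟨q₁, q₂⟩
  have hentry (m : ι) : ∑ x, σ p₁ x * Rm (lam - u) (p₂, m) (x, q₁)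
      = c * ∑ d, Rm u (p₁, p₂) (q₁, d) * σ d m := by
    simpa only [M23_mul_Sg12_apply, Matrix.smul_apply, M12_mul_Sg23_apply, smul_eq_mul]
      using congrFun (congrFun h (p₁, p₂, m)) q₁
  calc rot90 ω σ Rm lam u (p₁, p₂) (q₁, q₂)
      = ∑ m, (∑ x, σ p₁ x * Rm (lam - u) (p₂, m) (x, q₁)) * ω m q₂ := by
        simp only [rot90, Finset.sum_mul]
        exact Finset.sum_comm
    _ = c * ∑ d, Rm u (p₁, p₂) (q₁, d) * ∑ m, σ d m * ω m q₂ := by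
        simp only [hentry, Finset.mul_sum, Finset.sum_mul]
        rw [Finset.sum_comm]
        exact Finset.sum_congr rfl fun d _ => Finset.sum_congr rfl fun m _ => by ring
    _ = (c • Rm u) (p₁, p₂) (q₁, q₂) := by
        simp [hzig, mul_ite, Finset.sum_ite_eq']

theorem crossing_symmetric_implies_rotationally_invariant_general
    (Rm : ℂ → Matrix (ι × ι) (ι × ι) ℂ)
    (ω σ : ι → ι → ℂ) (lam : ℂ) (α : ℂ → ℂ)
    -- ω is an inner product: a π-graded morphism `V⊗V → 𝟏` (supported on pairs (i,i⁻¹)),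
    -- nondegenerate, with dual map σ
    (hzig1 : ∀ a c, (∑ b, σ a b * ω b c) = if a = c then (1 : ℂ) else 0)
    -- exceptional set of non-generic parameters
    (E : Set ℂ) (hE : E.Countable)
    -- inversion relation Ř(u)Ř(−u) = Id
    (hinv : ∀ u : ℂ, u ∉ E → -u ∉ E → Rm u * Rm (-u) = 1)
    -- crossing symmetry with parameter λ and function α
    (hcross2 : ∀ u : ℂ, u ∉ E → u + lam ∉ E →
      M12 (Rm u) * M23 (Rm (u + lam)) * Sg12 σ = α u • Sg23 σ) :
    -- conclusion: rotational invariance, Ř^{*₁}(u) = α(−u)·Ř(u) for generic u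
    ∃ E' : Set ℂ, E'.Countable ∧
      ∀ u ∉ E', rot90 ω σ Rm lam u = α (-u) • Rm u := by
  refine ⟨E ∪ Neg.neg ⁻¹' E ∪ (lam - ·) ⁻¹' E,
    (hE.union (hE.preimage neg_injective)).union (hE.preimage sub_right_injective), ?_⟩
  rintro u hu
  simp only [Set.mem_union, Set.mem_preimage, not_or] at hu
  obtain ⟨⟨hu, hnegu⟩, hlamu⟩ := hu
  have hcross := hcross2 (-u) hnegu (by rw [neg_add_eq_sub]; exact hlamu)
  rw [neg_add_eq_sub] at hcross
  exact rot90_eq_smul_of_M23_mul_Sg12_eq hzig1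
    (M23_mul_Sg12_eq_smul_of_mul_eq_one (hinv u hu hnegu) hcross)

/-- Let `V` be a π-graded complex vector space of finite type with inner
product `ω` and dual map `σ`, and let `Ř(u)` be an R-matrix on `V` (a meromorphic family of
π-graded endomorphisms of `V⊗V` satisfying the Yang–Baxter equation and the inversion
relation for generic `u`) which is crossing symmetric with crossing parameter `λ` and
meromorphic function `α`.  Then `Ř` is rotationally invariant:
`Ř^{*₁}(u) = α(−u)·Ř(u)` for generic `u`. -/
theorem crossing_symmetric_implies_rotationally_invariant
    (deg : ι → Arr C) (Rm : ℂ → Matrix (ι × ι) (ι × ι) ℂ)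
    (ω σ : ι → ι → ℂ) (lam : ℂ) (α : ℂ → ℂ)
    -- the entries of `Ř` and the function `α` are meromorphic
    (hMero : ∀ p q, MeromorphicOn (fun u => Rm u p q) Set.univ)
    (hαMero : MeromorphicOn α Set.univ)
    -- each `Ř(u)` is a morphism of π-graded vector spaces
    (hRgr : ∀ u, GradedR deg (Rm u))
    -- ω is an inner product: a π-graded morphism `V⊗V → 𝟏` (supported on pairs (i,i⁻¹)),
    -- nondegenerate, with dual map σ
    (hωgr : ∀ a b, ω a b ≠ 0 → deg b = ainv (deg a))
    (hσgr : ∀ a b, σ a b ≠ 0 → deg b = ainv (deg a))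
    (hzig1 : ∀ a c, (∑ b, σ a b * ω b c) = if a = c then (1 : ℂ) else 0)
    (hzig2 : ∀ a c, (∑ b, ω a b * σ b c) = if a = c then (1 : ℂ) else 0)
    -- exceptional set of non-generic parameters
    (E : Set ℂ) (hE : E.Countable)
    -- Yang–Baxter equation for generic parameters
    (hYBE : ∀ u v : ℂ, u ∉ E → v ∉ E → u - v ∉ E →
      M23 (Rm (u - v)) * M12 (Rm u) * M23 (Rm v)
        = M12 (Rm v) * M23 (Rm u) * M12 (Rm (u - v)))
    -- inversion relation Ř(u)Ř(−u) = Id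
    (hinv : ∀ u : ℂ, u ∉ E → -u ∉ E → Rm u * Rm (-u) = 1)
    -- crossing symmetry with parameter λ and function α
    (hcross1 : ∀ u : ℂ, u ∉ E → u + lam ∉ E →
      Om23 ω * M12 (Rm (u + lam)) * M23 (Rm u) = α u • Om12 ω)
    (hcross2 : ∀ u : ℂ, u ∉ E → u + lam ∉ E →
      M12 (Rm u) * M23 (Rm (u + lam)) * Sg12 σ = α u • Sg23 σ) :
    -- conclusion: rotational invariance, Ř^{*₁}(u) = α(−u)·Ř(u) for generic u
    ∃ E' : Set ℂ, E'.Countable ∧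
      ∀ u ∉ E', rot90 ω σ Rm lam u = α (-u) • Rm u :=
  crossing_symmetric_implies_rotationally_invariant_general Rm ω σ lam α hzig1 E hE hinv hcross2

end Stmt1
end

section
/- In the general linear rotation setting, the rotation of Ř_VV(u) by −180°, namely Ř'_{V*V*}(u) := (ω*⊗id_{V*}⊗id_{V*})(id_{V*}⊗Ř_{V*V}(λ−u)⊗id_V)(id_{V*}⊗id_{V*}⊗σ*), coincides with the rotation by 180°: Ř'_{V*V*}(u) = Ř_{V*V*}(u) as maps V*⊗V* → V*⊗V*, for all u where both sides are defined. -/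
open CategoryTheory
open scoped BigOperators

namespace Stmt2

variable {C : Type} [Groupoid C] [Fintype C] [DecidableEq C]
  [∀ a b : C, Fintype (a ⟶ b)] [∀ a b : C, DecidableEq (a ⟶ b)]

/-- The set of arrows of the groupoid `C`. -/
abbrev Arr (C : Type) [Groupoid C] := Σ a b : C, a ⟶ b

def src (α : Arr C) : C := α.1
def tgt (α : Arr C) : C := α.2.1
/-- inverse arrow -/
def ainv (α : Arr C) : Arr C := ⟨α.2.1, α.1, Groupoid.inv α.2.2⟩
/-- composition of composable arrows -/
def acomp (α β : Arr C) (h : tgt α = src β) : Arr C :=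
  ⟨src α, tgt β, α.2.2 ≫ eqToHom h ≫ β.2.2⟩

/-- `IsSquare i j k l` : the arrows `i,j` (vertically composable) and `k,l` (vertically
composable) form a commutative square, i.e. `j∘i = l∘k` with matching endpoints. -/
def IsSquare (i j k l : Arr C) : Prop :=
  ∃ (h₁ : tgt i = src j) (h₂ : tgt k = src l),
    src i = src k ∧ tgt j = tgt l ∧ acomp i j h₁ = acomp k l h₂

variable {ι : Type} [Fintype ι] [DecidableEq ι]

/-!  π-graded vector spaces of finite type are encoded by a finite basis index type `ι`
with a degree map `deg : ι → Arr C`; the vector `e a` (a basis vector of `V`) has degree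
`deg a`, and the dual basis vector `f a` of the dual space `V*` has degree `(deg a)⁻¹`.
Operators are encoded by their matrices in these bases.  Since `V` and `V*` share the
index type `ι`, all the operators `Ř_{VV}, Ř_{V*V}, Ř_{VV*}, Ř_{V*V*}` are matrices
indexed by `ι × ι`.

The general linear rotation data consists of
* `ω  : V ⊗ V* → 𝟏`, with matrix `ω a b` (coefficient on `e a ⊗ f b`),
* `σm : 𝟏 → V* ⊗ V`, with coefficients `σm a b` (on `f a ⊗ e b`),
* `ωs : V* ⊗ V → 𝟏`, with matrix `ωs a b` (on `f a ⊗ e b`),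
* `σs : 𝟏 → V ⊗ V*`, with coefficients `σs a b` (on `e a ⊗ f b`),
* a function `G` on the objects of the groupoid. -/

/-- A matrix (on any of the four twofold tensor products) is a π-graded morphism iff its
entries are supported on commutative squares.  Convention: `R p q` is the matrix element
from the `q = (q.1, q.2)` component to the `p = (p.1, p.2)` component. -/
def GradedR (deg : ι → Arr C) (R : Matrix (ι × ι) (ι × ι) ℂ) : Prop :=
  ∀ p q, R p q ≠ 0 → IsSquare (deg q.1) (deg q.2) (deg p.1) (deg p.2)

/-- operator acting on the factors 1,2 of a threefold tensor product. -/
noncomputable def M12 (R : Matrix (ι × ι) (ι × ι) ℂ) :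
    Matrix (ι × ι × ι) (ι × ι × ι) ℂ :=
  fun p q => R (p.1, p.2.1) (q.1, q.2.1) * (if p.2.2 = q.2.2 then 1 else 0)

/-- operator acting on the factors 2,3 of a threefold tensor product. -/
noncomputable def M23 (R : Matrix (ι × ι) (ι × ι) ℂ) :
    Matrix (ι × ι × ι) (ι × ι × ι) ℂ :=
  fun p q => (if p.1 = q.1 then 1 else 0) * R (p.2.1, p.2.2) (q.2.1, q.2.2)

/-- `Ř_{VV*}(u) := (id⊗id⊗ω)(id⊗Ř_VV(λ−u)⊗id)(σ⊗id⊗id) : V⊗V* → V*⊗V`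
(rotation by 90°), written for a family `F` in place of `Ř_VV`. -/
noncomputable def rotHead (ω σm : ι → ι → ℂ) (F : ℂ → Matrix (ι × ι) (ι × ι) ℂ)
    (lam u : ℂ) : Matrix (ι × ι) (ι × ι) ℂ :=
  fun p q => ∑ b : ι, ∑ m : ι, σm p.1 b * F (lam - u) (p.2, m) (b, q.1) * ω m q.2

/-- `Ř_{V*V}(u) := (ω*⊗id⊗id)(id⊗Ř_VV(λ−u)⊗id)(id⊗id⊗σ*) : V*⊗V → V⊗V*`
(rotation by −90°), written for a family `F` in place of `Ř_VV`. -/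
noncomputable def rotTail (ωs σs : ι → ι → ℂ) (F : ℂ → Matrix (ι × ι) (ι × ι) ℂ)
    (lam u : ℂ) : Matrix (ι × ι) (ι × ι) ℂ :=
  fun p q => ∑ c : ι, ∑ m : ι, ωs q.1 m * F (lam - u) (m, p.1) (q.2, c) * σs c p.2

/-- `Ř_{VV*}(u) : V⊗V* → V*⊗V`, the rotation by 90° of `Ř_VV`. -/
noncomputable def RVVs (ω σm : ι → ι → ℂ) (Rm : ℂ → Matrix (ι × ι) (ι × ι) ℂ)
    (lam u : ℂ) : Matrix (ι × ι) (ι × ι) ℂ := rotHead ω σm Rm lam u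

/-- `Ř_{V*V}(u) : V*⊗V → V⊗V*`, the rotation by −90° of `Ř_VV`. -/
noncomputable def RVsV (ωs σs : ι → ι → ℂ) (Rm : ℂ → Matrix (ι × ι) (ι × ι) ℂ)
    (lam u : ℂ) : Matrix (ι × ι) (ι × ι) ℂ := rotTail ωs σs Rm lam u

/-- `Ř_{V*V*}(u) := (id⊗id⊗ω)(id⊗Ř_{VV*}(λ−u)⊗id)(σ⊗id⊗id) : V*⊗V* → V*⊗V*`,
the rotation by 180° of `Ř_VV`. -/
noncomputable def RVsVs (ω σm : ι → ι → ℂ) (Rm : ℂ → Matrix (ι × ι) (ι × ι) ℂ)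
    (lam u : ℂ) : Matrix (ι × ι) (ι × ι) ℂ :=
  rotHead ω σm (fun v => RVVs ω σm Rm lam v) lam u

/-- `Ř'_{V*V*}(u) := (ω*⊗id⊗id)(id⊗Ř_{V*V}(λ−u)⊗id)(id⊗id⊗σ*) : V*⊗V* → V*⊗V*`,
the rotation by −180° of `Ř_VV`. -/
noncomputable def RVsVs' (ωs σs : ι → ι → ℂ) (Rm : ℂ → Matrix (ι × ι) (ι × ι) ℂ)
    (lam u : ℂ) : Matrix (ι × ι) (ι × ι) ℂ :=
  rotTail ωs σs (fun v => RVsV ωs σs Rm lam v) lam u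

/-- swapping the two pairs of summation variables in a fourfold sum -/
lemma swap4 (f : ι → ι → ι → ι → ℂ) :
    (∑ c, ∑ m, ∑ c', ∑ m', f c m c' m') = ∑ c', ∑ m', ∑ c, ∑ m, f c m c' m' := by
  calc (∑ c, ∑ m, ∑ c', ∑ m', f c m c' m')
      = ∑ x : ι × ι, ∑ y : ι × ι, f x.1 x.2 y.1 y.2 := by
        simp [Fintype.sum_prod_type]
    _ = ∑ y : ι × ι, ∑ x : ι × ι, f x.1 x.2 y.1 y.2 := Finset.sum_comm
    _ = _ := by simp [Fintype.sum_prod_type]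

/-- on a commutative square, the product of the `G`-ratios of the two vertical
composites agree -/
lemma gsq (G : C → ℂ) (hG : ∀ x, G x ≠ 0) {dm dm' dc dc' : Arr C}
    (hsq : IsSquare dc dc' dm' dm) :
    G (src dm) / G (tgt dm) * (G (src dm') / G (tgt dm')) =
      G (src dc) / G (tgt dc) * (G (src dc') / G (tgt dc')) := by
  obtain ⟨hA, hB, hsrc, htgt, -⟩ := hsq
  rw [← hB, ← hA, hsrc, htgt]
  field_simp [hG (tgt dm'), hG (tgt dm), hG (tgt dc)]

/-- Lemma on rotations:  in the general linear rotation setting, the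
rotation of `Ř_VV(u)` by −180° coincides with the rotation by 180°:
`Ř'_{V*V*}(u) = Ř_{V*V*}(u)` as maps `V*⊗V* → V*⊗V*`, for all `u` where both sides are
defined (our encodings are total). -/
theorem rotation_by_180_well_defined
    (deg : ι → Arr C) (Rm : ℂ → Matrix (ι × ι) (ι × ι) ℂ)
    (ω σm ωs σs : ι → ι → ℂ) (G : C → ℂ) (lam : ℂ)
    -- each `Ř_VV(u)` is a morphism of π-graded vector spaces
    (hRgr : ∀ u, GradedR deg (Rm u))
    -- the grading supports of the duality data:
    -- `ω` is supported on `V_i ⊗ (V*)_{i⁻¹}`, etc.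
    (hωgr : ∀ a b, ω a b ≠ 0 → deg b = deg a)
    (hσgr : ∀ a b, σm a b ≠ 0 → deg b = deg a)
    (hωsgr : ∀ a b, ωs a b ≠ 0 → deg b = deg a)
    (hσsgr : ∀ a b, σs a b ≠ 0 → deg b = deg a)
    -- ω is nondegenerate with dual σ:
    -- (id_{V*}⊗ω)(σ⊗id_{V*}) = id_{V*},  (ω⊗id_V)(id_V⊗σ) = id_V
    (hzig1 : ∀ a c, (∑ b, σm a b * ω b c) = if a = c then (1 : ℂ) else 0)
    (hzig2 : ∀ a c, (∑ b, ω a b * σm b c) = if a = c then (1 : ℂ) else 0)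
    -- G is a function on objects with values in ℂ^×
    (hG : ∀ x, G x ≠ 0)
    -- ω*_{−i,i} := (G(s(i))/G(t(i))) ω_{i,−i}∘P_{−i,i}
    (hωs : ∀ a b, ωs a b = G (src (deg a)) / G (tgt (deg a)) * ω b a)
    -- σ* is the dual of ω*:
    -- (id_V⊗ω*)(σ*⊗id_V) = id_V,  (ω*⊗id_{V*})(id_{V*}⊗σ*) = id_{V*}
    (hzig3 : ∀ a c, (∑ b, σs a b * ωs b c) = if a = c then (1 : ℂ) else 0)
    (hzig4 : ∀ a c, (∑ b, ωs a b * σs b c) = if a = c then (1 : ℂ) else 0) :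
    ∀ u : ℂ, RVsVs' ωs σs Rm lam u = RVsVs ω σm Rm lam u := by
  classical
  set g : ι → ℂ := fun a => G (src (deg a)) / G (tgt (deg a)) with hgdef
  have hgne : ∀ a, g a ≠ 0 := fun a => div_ne_zero (hG _) (hG _)
  have hωs' : ∀ a b, ωs a b = g a * ω b a := fun a b => hωs a b
  -- the dual σ* is expressed through σ and G
  have hτ : ∀ a c, (∑ b, ωs a b * (σm c b / g b)) = if a = c then (1 : ℂ) else 0 := by
    intro a c
    have h : ∀ b, ωs a b * (σm c b / g b) = σm c b * ω b a := by
      intro b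
      rcases eq_or_ne (ω b a) 0 with h0 | h0
      · simp [hωs' a b, h0]
      · have hd : deg a = deg b := hωgr b a h0
        have hgb : g b = g a := by simp only [hgdef]; rw [hd]
        rw [hωs' a b, hgb]
        field_simp [hgne a]
    rw [Finset.sum_congr rfl fun b _ => h b, hzig1 c a]
    simp [eq_comm]
  have hσs' : ∀ a d, σs a d = σm d a / g a := by
    intro a d
    calc σs a d = ∑ b, σs a b * (if b = d then (1 : ℂ) else 0) := by simp
      _ = ∑ b, σs a b * ∑ c, ωs b c * (σm d c / g c) :=
          Finset.sum_congr rfl fun b _ => by rw [hτ b d]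
      _ = ∑ c, (∑ b, σs a b * ωs b c) * (σm d c / g c) := by
          simp_rw [Finset.mul_sum, Finset.sum_mul, mul_assoc]
          exact Finset.sum_comm
      _ = ∑ c, (if a = c then (1 : ℂ) else 0) * (σm d c / g c) := by simp_rw [hzig3]
      _ = σm d a / g a := by simp
  intro u
  funext p q
  have hL : RVsVs' ωs σs Rm lam u p q
      = ∑ c, ∑ m, ∑ c', ∑ m',
        ωs q.1 m * ωs q.2 m' * Rm u (m', m) (c, c') * σs c' p.1 * σs c p.2 := by
    simp only [RVsVs', RVsV, rotTail, sub_sub_cancel, Finset.mul_sum, Finset.sum_mul]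
    exact Finset.sum_congr rfl fun c _ => Finset.sum_congr rfl fun m _ =>
      Finset.sum_congr rfl fun c' _ => Finset.sum_congr rfl fun m' _ => by ring
  have hR : RVsVs ω σm Rm lam u p q
      = ∑ b, ∑ m, ∑ b', ∑ m',
        σm p.1 b * σm p.2 b' * Rm u (m, m') (b', b) * ω m' q.1 * ω m q.2 := by
    simp only [RVsVs, RVVs, rotHead, sub_sub_cancel, Finset.mul_sum, Finset.sum_mul]
    exact Finset.sum_congr rfl fun b _ => Finset.sum_congr rfl fun m _ =>
      Finset.sum_congr rfl fun b' _ => Finset.sum_congr rfl fun m' _ => by ring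
  rw [hL, hR]
  have key : ∀ c m c' m',
      ωs q.1 m * ωs q.2 m' * Rm u (m', m) (c, c') * σs c' p.1 * σs c p.2
        = σm p.1 c' * σm p.2 c * Rm u (m', m) (c, c') * ω m q.1 * ω m' q.2 := by
    intro c m c' m'
    rcases eq_or_ne (Rm u (m', m) (c, c')) 0 with hR0 | hR0
    · simp [hR0]
    rcases eq_or_ne (ω m q.1) 0 with h1 | h1
    · simp [hωs' q.1 m, h1]
    rcases eq_or_ne (ω m' q.2) 0 with h2 | h2
    · simp [hωs' q.2 m', h2]
    rcases eq_or_ne (σm p.1 c') 0 with h3 | h3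
    · simp [hσs' c' p.1, h3]
    rcases eq_or_ne (σm p.2 c) 0 with h4 | h4
    · simp [hσs' c p.2, h4]
    have hd1 : deg q.1 = deg m := hωgr m q.1 h1
    have hd2 : deg q.2 = deg m' := hωgr m' q.2 h2
    have hsq : IsSquare (deg c) (deg c') (deg m') (deg m) := hRgr u (m', m) (c, c') hR0
    have hgg : g q.1 * g q.2 = g c * g c' := by
      simp only [hgdef]
      rw [hd1, hd2]
      exact gsq G hG hsq
    rw [hωs' q.1 m, hωs' q.2 m', hσs' c' p.1, hσs' c p.2]
    field_simp [hgne c, hgne c']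
    linear_combination hgg
  calc (∑ c, ∑ m, ∑ c', ∑ m',
        ωs q.1 m * ωs q.2 m' * Rm u (m', m) (c, c') * σs c' p.1 * σs c p.2)
      = ∑ c, ∑ m, ∑ c', ∑ m',
        σm p.1 c' * σm p.2 c * Rm u (m', m) (c, c') * ω m q.1 * ω m' q.2 :=
        Finset.sum_congr rfl fun c _ => Finset.sum_congr rfl fun m _ =>
          Finset.sum_congr rfl fun c' _ => Finset.sum_congr rfl fun m' _ =>
            key c m c' m'
    _ = ∑ c', ∑ m', ∑ c, ∑ m,
        σm p.1 c' * σm p.2 c * Rm u (m', m) (c, c') * ω m q.1 * ω m' q.2 := swap4 _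
    _ = ∑ b, ∑ m, ∑ b', ∑ m',
        σm p.1 b * σm p.2 b' * Rm u (m, m') (b', b) * ω m' q.1 * ω m q.2 := rfl

end Stmt2
end

section
/- In the general linear rotation setting, the rotation of Ř_{VV*}(u) by −180° equals its rotation by 180°: for all compatible indices, ω*_{−i,i}ω_{j,−j}(Ř_{VV*})^{−j,i}_{l,−k}(u)σ^{−k,k}σ*^{l,−l} = σ*^{k,−k}σ^{−l,l}(Ř_{VV*})^{−j,i}_{l,−k}(u)ω_{i,−i}ω*_{−j,j}, and both are equal to the component (Ř_{V*V})^{k,−l}_{−i,j}(u) of Ř_{V*V}(u). -/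
open CategoryTheory
open scoped BigOperators

namespace Stmt3

variable {C : Type} [Groupoid C] [Fintype C] [DecidableEq C]
  [∀ a b : C, Fintype (a ⟶ b)] [∀ a b : C, DecidableEq (a ⟶ b)]

/-- The set of arrows of the groupoid `C`. -/
abbrev Arr (C : Type) [Groupoid C] := Σ a b : C, a ⟶ b

def src (α : Arr C) : C := α.1
def tgt (α : Arr C) : C := α.2.1
/-- inverse arrow -/
def ainv (α : Arr C) : Arr C := ⟨α.2.1, α.1, Groupoid.inv α.2.2⟩
/-- composition of composable arrows -/
def acomp (α β : Arr C) (h : tgt α = src β) : Arr C :=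
  ⟨src α, tgt β, α.2.2 ≫ eqToHom h ≫ β.2.2⟩

/-- `IsSquare i j k l` : the arrows `i,j` (vertically composable) and `k,l` (vertically
composable) form a commutative square, i.e. `j∘i = l∘k` with matching endpoints. -/
def IsSquare (i j k l : Arr C) : Prop :=
  ∃ (h₁ : tgt i = src j) (h₂ : tgt k = src l),
    src i = src k ∧ tgt j = tgt l ∧ acomp i j h₁ = acomp k l h₂

variable {ι : Type} [Fintype ι] [DecidableEq ι]

/-!  π-graded vector spaces of finite type are encoded by a finite basis index type `ι`
with a degree map `deg : ι → Arr C`; the vector `e a` (a basis vector of `V`) has degree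
`deg a`, and the dual basis vector `f a` of the dual space `V*` has degree `(deg a)⁻¹`.
Operators are encoded by their matrices in these bases.  Since `V` and `V*` share the
index type `ι`, all the operators `Ř_{VV}, Ř_{V*V}, Ř_{VV*}, Ř_{V*V*}` are matrices
indexed by `ι × ι`.

The general linear rotation data consists of
* `ω  : V ⊗ V* → 𝟏`, with matrix `ω a b` (coefficient on `e a ⊗ f b`),
* `σm : 𝟏 → V* ⊗ V`, with coefficients `σm a b` (on `f a ⊗ e b`),
* `ωs : V* ⊗ V → 𝟏`, with matrix `ωs a b` (on `f a ⊗ e b`),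
* `σs : 𝟏 → V ⊗ V*`, with coefficients `σs a b` (on `e a ⊗ f b`),
* a function `G` on the objects of the groupoid. -/

/-- A matrix (on any of the four twofold tensor products) is a π-graded morphism iff its
entries are supported on commutative squares.  Convention: `R p q` is the matrix element
from the `q = (q.1, q.2)` component to the `p = (p.1, p.2)` component. -/
def GradedR (deg : ι → Arr C) (R : Matrix (ι × ι) (ι × ι) ℂ) : Prop :=
  ∀ p q, R p q ≠ 0 → IsSquare (deg q.1) (deg q.2) (deg p.1) (deg p.2)

/-- operator acting on the factors 1,2 of a threefold tensor product. -/
noncomputable def M12 (R : Matrix (ι × ι) (ι × ι) ℂ) :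
    Matrix (ι × ι × ι) (ι × ι × ι) ℂ :=
  fun p q => R (p.1, p.2.1) (q.1, q.2.1) * (if p.2.2 = q.2.2 then 1 else 0)

/-- operator acting on the factors 2,3 of a threefold tensor product. -/
noncomputable def M23 (R : Matrix (ι × ι) (ι × ι) ℂ) :
    Matrix (ι × ι × ι) (ι × ι × ι) ℂ :=
  fun p q => (if p.1 = q.1 then 1 else 0) * R (p.2.1, p.2.2) (q.2.1, q.2.2)

/-- `Ř_{VV*}(u) := (id⊗id⊗ω)(id⊗Ř_VV(λ−u)⊗id)(σ⊗id⊗id) : V⊗V* → V*⊗V`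
(rotation by 90°), written for a family `F` in place of `Ř_VV`. -/
noncomputable def rotHead (ω σm : ι → ι → ℂ) (F : ℂ → Matrix (ι × ι) (ι × ι) ℂ)
    (lam u : ℂ) : Matrix (ι × ι) (ι × ι) ℂ :=
  fun p q => ∑ b : ι, ∑ m : ι, σm p.1 b * F (lam - u) (p.2, m) (b, q.1) * ω m q.2

/-- `Ř_{V*V}(u) := (ω*⊗id⊗id)(id⊗Ř_VV(λ−u)⊗id)(id⊗id⊗σ*) : V*⊗V → V⊗V*`
(rotation by −90°), written for a family `F` in place of `Ř_VV`. -/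
noncomputable def rotTail (ωs σs : ι → ι → ℂ) (F : ℂ → Matrix (ι × ι) (ι × ι) ℂ)
    (lam u : ℂ) : Matrix (ι × ι) (ι × ι) ℂ :=
  fun p q => ∑ c : ι, ∑ m : ι, ωs q.1 m * F (lam - u) (m, p.1) (q.2, c) * σs c p.2

/-- `Ř_{VV*}(u) : V⊗V* → V*⊗V`, the rotation by 90° of `Ř_VV`. -/
noncomputable def RVVs (ω σm : ι → ι → ℂ) (Rm : ℂ → Matrix (ι × ι) (ι × ι) ℂ)
    (lam u : ℂ) : Matrix (ι × ι) (ι × ι) ℂ := rotHead ω σm Rm lam u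

/-- `Ř_{V*V}(u) : V*⊗V → V⊗V*`, the rotation by −90° of `Ř_VV`. -/
noncomputable def RVsV (ωs σs : ι → ι → ℂ) (Rm : ℂ → Matrix (ι × ι) (ι × ι) ℂ)
    (lam u : ℂ) : Matrix (ι × ι) (ι × ι) ℂ := rotTail ωs σs Rm lam u

/-- `Ř_{V*V*}(u) := (id⊗id⊗ω)(id⊗Ř_{VV*}(λ−u)⊗id)(σ⊗id⊗id) : V*⊗V* → V*⊗V*`,
the rotation by 180° of `Ř_VV`. -/
noncomputable def RVsVs (ω σm : ι → ι → ℂ) (Rm : ℂ → Matrix (ι × ι) (ι × ι) ℂ)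
    (lam u : ℂ) : Matrix (ι × ι) (ι × ι) ℂ :=
  rotHead ω σm (fun v => RVVs ω σm Rm lam v) lam u

/-- the rotation by −180° of an operator `F : V⊗V* → V*⊗V`, i.e. componentwise
`ω*_{−i,i} ω_{j,−j} F^{−j,i}_{l,−k}(u) σ^{−k,k} σ*^{l,−l}` (a map `V*⊗V → V⊗V*`). -/
noncomputable def rotNeg180 (ω σm ωs σs : ι → ι → ℂ)
    (F : Matrix (ι × ι) (ι × ι) ℂ) : Matrix (ι × ι) (ι × ι) ℂ :=
  fun p q => ∑ pp : ι, ∑ a : ι, ∑ j' : ι, ∑ i' : ι,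
    ωs q.1 i' * ω q.2 j' * F (j', i') (pp, a) * σm a p.1 * σs pp p.2

/-- the rotation by 180° of an operator `F : V⊗V* → V*⊗V`, i.e. componentwise
`σ*^{k,−k} σ^{−l,l} F^{−j,i}_{l,−k}(u) ω_{i,−i} ω*_{−j,j}` (a map `V*⊗V → V⊗V*`). -/
noncomputable def rotPos180 (ω σm ωs σs : ι → ι → ℂ)
    (F : Matrix (ι × ι) (ι × ι) ℂ) : Matrix (ι × ι) (ι × ι) ℂ :=
  fun p q => ∑ pp : ι, ∑ a : ι, ∑ i' : ι, ∑ j' : ι,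
    σs p.1 a * σm p.2 pp * F (j', i') (pp, a) * ω i' q.1 * ωs j' q.2

set_option linter.unusedSectionVars false
set_option linter.unusedVariables false

lemma gsq (G : C → ℂ) (hG : ∀ x, G x ≠ 0) {i j k l : Arr C} (h : IsSquare i j k l) :
    G (src i) / G (tgt i) * (G (src j) / G (tgt j))
      = G (src k) / G (tgt k) * (G (src l) / G (tgt l)) := by
  obtain ⟨h₁, h₂, hs, ht, -⟩ := h
  rw [h₁, h₂, hs, ht]
  rw [div_mul_div_comm, div_mul_div_comm]
  rw [mul_comm (G (src j)) (G (tgt l)), mul_comm (G (src l)) (G (tgt l))]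
  rw [mul_div_mul_right _ _ (hG (src j)), mul_div_mul_right _ _ (hG (src l))]

lemma sum3aux (f : ι → ι → ι → ℂ) :
    (∑ a : ι, ∑ b : ι, ∑ c : ι, f a b c) = ∑ c : ι, ∑ a : ι, ∑ b : ι, f a b c :=
  calc (∑ a : ι, ∑ b : ι, ∑ c : ι, f a b c)
      = ∑ a : ι, ∑ c : ι, ∑ b : ι, f a b c :=
        Finset.sum_congr rfl fun a _ => Finset.sum_comm
    _ = ∑ c : ι, ∑ a : ι, ∑ b : ι, f a b c := Finset.sum_comm

lemma sum4aux (f : ι → ι → ι → ι → ℂ) :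
    (∑ a : ι, ∑ b : ι, ∑ c : ι, ∑ d : ι, f a b c d)
      = ∑ c : ι, ∑ d : ι, ∑ a : ι, ∑ b : ι, f a b c d :=
  calc (∑ a : ι, ∑ b : ι, ∑ c : ι, ∑ d : ι, f a b c d)
      = ∑ a : ι, ∑ c : ι, ∑ b : ι, ∑ d : ι, f a b c d :=
        Finset.sum_congr rfl fun a _ => Finset.sum_comm
    _ = ∑ c : ι, ∑ a : ι, ∑ b : ι, ∑ d : ι, f a b c d := Finset.sum_comm
    _ = ∑ c : ι, ∑ a : ι, ∑ d : ι, ∑ b : ι, f a b c d :=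
        Finset.sum_congr rfl fun c _ => Finset.sum_congr rfl fun a _ => Finset.sum_comm
    _ = ∑ c : ι, ∑ d : ι, ∑ a : ι, ∑ b : ι, f a b c d :=
        Finset.sum_congr rfl fun c _ => Finset.sum_comm

lemma collapse1 (ω σm : ι → ι → ℂ) (R : Matrix (ι × ι) (ι × ι) ℂ)
    (hzig2 : ∀ a c, (∑ b, ω a b * σm b c) = if a = c then (1 : ℂ) else 0)
    (q2 p1 i' pp : ι) :
    (∑ a : ι, ∑ j' : ι,
        ω q2 j' * (∑ b : ι, ∑ m : ι, σm j' b * R (i', m) (b, pp) * ω m a) * σm a p1)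
      = R (i', p1) (q2, pp) := by
  have step1 : ∀ a j' : ι,
      ω q2 j' * (∑ b : ι, ∑ m : ι, σm j' b * R (i', m) (b, pp) * ω m a) * σm a p1
        = ∑ b : ι, ∑ m : ι,
            (ω q2 j' * σm j' b) * (R (i', m) (b, pp) * (ω m a * σm a p1)) := by
    intro a j'
    simp only [Finset.mul_sum, Finset.sum_mul]
    exact Finset.sum_congr rfl fun b _ => Finset.sum_congr rfl fun m _ => by ring
  simp only [step1]
  rw [sum4aux (fun a j' b m => (ω q2 j' * σm j' b) * (R (i', m) (b, pp) * (ω m a * σm a p1)))]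
  have step2 : ∀ b m : ι,
      (∑ a : ι, ∑ j' : ι, (ω q2 j' * σm j' b) * (R (i', m) (b, pp) * (ω m a * σm a p1)))
        = (if q2 = b then (1:ℂ) else 0) * (R (i', m) (b, pp) * (if m = p1 then (1:ℂ) else 0)) := by
    intro b m
    have h1 : ∀ a : ι, (∑ j' : ι, (ω q2 j' * σm j' b) * (R (i', m) (b, pp) * (ω m a * σm a p1)))
        = (if q2 = b then (1:ℂ) else 0) * (R (i', m) (b, pp) * (ω m a * σm a p1)) := by
      intro a
      rw [← Finset.sum_mul, hzig2]
    simp only [h1]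
    rw [← Finset.mul_sum, ← Finset.mul_sum, hzig2]
  simp only [step2]
  simp [Finset.sum_ite_eq, Finset.sum_ite_eq']

lemma collapse2 (ω σm : ι → ι → ℂ) (g : ι → ℂ) (R : Matrix (ι × ι) (ι × ι) ℂ)
    (hzig2 : ∀ a c, (∑ b, ω a b * σm b c) = if a = c then (1 : ℂ) else 0)
    (hgne : ∀ a, g a ≠ 0)
    (hω : ∀ a b, ω a b ≠ 0 → g b = g a)
    (hσ : ∀ a b, σm a b ≠ 0 → g b = g a)
    (q2 p1 i' pp : ι) :
    (∑ a : ι, ∑ j' : ι,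
        (σm a p1 / g a) * (∑ b : ι, ∑ m : ι, σm j' b * R (i', m) (b, pp) * ω m a)
          * (g j' * ω q2 j'))
      = g q2 / g p1 * R (i', p1) (q2, pp) := by
  have step : ∀ a j' : ι,
      (σm a p1 / g a) * (∑ b : ι, ∑ m : ι, σm j' b * R (i', m) (b, pp) * ω m a)
          * (g j' * ω q2 j')
        = g q2 / g p1 *
            (ω q2 j' * (∑ b : ι, ∑ m : ι, σm j' b * R (i', m) (b, pp) * ω m a) * σm a p1) := by
    intro a j'
    by_cases hσm : σm a p1 = 0
    · simp [hσm]
    by_cases hω0 : ω q2 j' = 0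
    · simp [hω0]
    have ha : g p1 = g a := hσ a p1 hσm
    have hj : g j' = g q2 := hω q2 j' hω0
    rw [← ha, hj]
    field_simp
  simp only [step]
  simp only [← Finset.mul_sum]
  rw [collapse1 ω σm R hzig2 q2 p1 i' pp]


/-- Corollary on rotating `Ř_{VV*}`:  in the general linear rotation
setting, the rotation of `Ř_{VV*}(u)` by −180° equals its rotation by 180°, and both are
equal to `Ř_{V*V}(u)`. -/
theorem rotations_of_RVVstar
    (deg : ι → Arr C) (Rm : ℂ → Matrix (ι × ι) (ι × ι) ℂ)
    (ω σm ωs σs : ι → ι → ℂ) (G : C → ℂ) (lam : ℂ)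
    -- each `Ř_VV(u)` is a morphism of π-graded vector spaces
    (hRgr : ∀ u, GradedR deg (Rm u))
    -- grading supports of the duality data
    (hωgr : ∀ a b, ω a b ≠ 0 → deg b = deg a)
    (hσgr : ∀ a b, σm a b ≠ 0 → deg b = deg a)
    (hωsgr : ∀ a b, ωs a b ≠ 0 → deg b = deg a)
    (hσsgr : ∀ a b, σs a b ≠ 0 → deg b = deg a)
    -- ω nondegenerate with dual σ
    (hzig1 : ∀ a c, (∑ b, σm a b * ω b c) = if a = c then (1 : ℂ) else 0)
    (hzig2 : ∀ a c, (∑ b, ω a b * σm b c) = if a = c then (1 : ℂ) else 0)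
    -- G with values in ℂ^×, defining ω*
    (hG : ∀ x, G x ≠ 0)
    (hωs : ∀ a b, ωs a b = G (src (deg a)) / G (tgt (deg a)) * ω b a)
    -- σ* dual to ω*
    (hzig3 : ∀ a c, (∑ b, σs a b * ωs b c) = if a = c then (1 : ℂ) else 0)
    (hzig4 : ∀ a c, (∑ b, ωs a b * σs b c) = if a = c then (1 : ℂ) else 0) :
    ∀ u : ℂ,
      rotNeg180 ω σm ωs σs (RVVs ω σm Rm lam u)
          = rotPos180 ω σm ωs σs (RVVs ω σm Rm lam u)
        ∧ rotNeg180 ω σm ωs σs (RVVs ω σm Rm lam u) = RVsV ωs σs Rm lam u := by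
  intro u
  set g : ι → ℂ := fun x => G (src (deg x)) / G (tgt (deg x)) with hgdef
  have hgne : ∀ a, g a ≠ 0 := fun a => div_ne_zero (hG _) (hG _)
  have hωs' : ∀ a b, ωs a b = g a * ω b a := hωs
  have hgω : ∀ a b, ω a b ≠ 0 → g b = g a := by
    intro a b h; simp only [hgdef, hωgr a b h]
  have hgσ : ∀ a b, σm a b ≠ 0 → g b = g a := by
    intro a b h; simp only [hgdef, hσgr a b h]
  -- the formula for σ* in terms of σ and g
  have hσs : ∀ a b, σs a b = σm b a / g b := by
    have hinv : ∀ b c, (∑ d, ωs b d * (σm c d / g d)) = if b = c then (1 : ℂ) else 0 := by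
      intro b c
      have h1 : ∀ d, ωs b d * (σm c d / g d) = g b / g c * (σm c d * ω d b) := by
        intro d
        by_cases h : σm c d = 0
        · simp [h]
        · have hd : g d = g c := hgσ c d h
          rw [hωs' b d, hd]
          field_simp
      rw [Finset.sum_congr rfl fun d _ => h1 d, ← Finset.mul_sum, hzig1 c b]
      by_cases h : b = c
      · subst h; simp [hgne b]
      · simp [h, Ne.symm h]
    intro a c
    have key : (∑ b, (∑ d, σs a d * ωs d b) * (σm c b / g b)) = σs a c := by
      have h2 : ∀ b, (∑ d, σs a d * ωs d b) * (σm c b / g b)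
          = ∑ d, σs a d * (ωs d b * (σm c b / g b)) := by
        intro b; rw [Finset.sum_mul]
        exact Finset.sum_congr rfl fun d _ => by ring
      simp only [h2]
      rw [Finset.sum_comm]
      have h3 : ∀ d, (∑ b, σs a d * (ωs d b * (σm c b / g b)))
          = σs a d * (if d = c then (1:ℂ) else 0) := by
        intro d; rw [← Finset.mul_sum, hinv d c]
      simp only [h3]
      simp
    have : σs a c = ∑ b, (if a = b then (1:ℂ) else 0) * (σm c b / g b) := by
      rw [← key]
      exact Finset.sum_congr rfl fun b _ => by rw [hzig3 a b]
    have this2 : σs a c = σm c a / g a := by simpa using this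
    rcases eq_or_ne (σm c a) 0 with h | h
    · simpa [h] using this2
    · rw [this2, hgσ c a h]
  -- rotation by −180° equals Ř_{V*V}
  have hB : rotNeg180 ω σm ωs σs (RVVs ω σm Rm lam u) = RVsV ωs σs Rm lam u := by
    funext p q
    simp only [rotNeg180, RVVs, rotHead, RVsV, rotTail]
    refine Finset.sum_congr rfl fun pp _ => ?_
    have step : ∀ a j' i' : ι,
        ωs q.1 i' * ω q.2 j'
            * (∑ b : ι, ∑ m : ι, σm j' b * Rm (lam - u) (i', m) (b, pp) * ω m a)
            * σm a p.1 * σs pp p.2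
          = (ω q.2 j' * (∑ b : ι, ∑ m : ι, σm j' b * Rm (lam - u) (i', m) (b, pp) * ω m a)
              * σm a p.1) * (ωs q.1 i' * σs pp p.2) := fun _ _ _ => by ring
    simp only [step]
    rw [sum3aux (fun a j' i' =>
      (ω q.2 j' * (∑ b : ι, ∑ m : ι, σm j' b * Rm (lam - u) (i', m) (b, pp) * ω m a)
        * σm a p.1) * (ωs q.1 i' * σs pp p.2))]
    refine Finset.sum_congr rfl fun i' _ => ?_
    simp only [← Finset.sum_mul]
    have unfac : (∑ a : ι, (∑ j' : ι, ω q.2 j'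
          * (∑ b : ι, ∑ m : ι, σm j' b * Rm (lam - u) (i', m) (b, pp) * ω m a)) * σm a p.1)
        = ∑ a : ι, ∑ j' : ι, ω q.2 j'
          * (∑ b : ι, ∑ m : ι, σm j' b * Rm (lam - u) (i', m) (b, pp) * ω m a) * σm a p.1 :=
      Finset.sum_congr rfl fun a _ => Finset.sum_mul _ _ _
    rw [unfac, collapse1 ω σm (Rm (lam - u)) hzig2 q.2 p.1 i' pp]
    ring
  -- rotation by +180° equals Ř_{V*V}
  have hC : rotPos180 ω σm ωs σs (RVVs ω σm Rm lam u) = RVsV ωs σs Rm lam u := by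
    funext p q
    simp only [rotPos180, RVVs, rotHead, RVsV, rotTail]
    refine Finset.sum_congr rfl fun pp _ => ?_
    have step : ∀ a i' j' : ι,
        σs p.1 a * σm p.2 pp
            * (∑ b : ι, ∑ m : ι, σm j' b * Rm (lam - u) (i', m) (b, pp) * ω m a)
            * ω i' q.1 * ωs j' q.2
          = ((σm a p.1 / g a)
              * (∑ b : ι, ∑ m : ι, σm j' b * Rm (lam - u) (i', m) (b, pp) * ω m a)
              * (g j' * ω q.2 j')) * (σm p.2 pp * ω i' q.1) := by
      intro a i' j'
      rw [hσs p.1 a, hωs' j' q.2]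
      ring
    simp only [step]
    rw [Finset.sum_comm]
    refine Finset.sum_congr rfl fun i' _ => ?_
    simp only [← Finset.sum_mul]
    rw [collapse2 ω σm g (Rm (lam - u)) hzig2 hgne hgω hgσ q.2 p.1 i' pp]
    rw [hωs' q.1 i', hσs pp p.2]
    -- termwise equality using the grading of R and the square lemma
    by_cases hR0 : Rm (lam - u) (i', p.1) (q.2, pp) = 0
    · simp [hR0]
    by_cases hσ0 : σm p.2 pp = 0
    · simp [hσ0]
    by_cases hω0 : ω i' q.1 = 0
    · simp [hω0]
    have hpp : g pp = g p.2 := hgσ p.2 pp hσ0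
    have hi' : g q.1 = g i' := hgω i' q.1 hω0
    have hsq : IsSquare (deg q.2) (deg pp) (deg i') (deg p.1) :=
      hRgr (lam - u) (i', p.1) (q.2, pp) hR0
    have hkey : g q.2 * g pp = g i' * g p.1 := gsq G hG hsq
    have hdiv : g q.2 / g p.1 = g q.1 / g pp := by
      rw [div_eq_div_iff (hgne p.1) (hgne pp), hi']
      linear_combination hkey
    rw [hdiv, hi', hpp]
    ring
  exact ⟨hB.trans hC.symm, hB⟩


end Stmt3
end

section
/- In the general linear rotation setting, if Ř_VV(u) is an R-matrix on V (it satisfies the Yang–Baxter equation), then its rotations satisfy the following mixed Yang–Baxter equations for generic u₁, u₂: Ř_{V*V}^{(23)}(u₁−u₂)Ř_{V*V}^{(12)}(u₁)Ř_VV^{(23)}(u₂) = Ř_VV^{(12)}(u₂)Ř_{V*V}^{(23)}(u₁)Ř_{V*V}^{(12)}(u₁−u₂), and Ř_{V*V*}^{(23)}(u₁−u₂)Ř_{V*V}^{(12)}(u₁)Ř_{V*V}^{(23)}(u₂) = Ř_{V*V}^{(12)}(u₂)Ř_{V*V}^{(23)}(u₁)Ř_{V*V*}^{(12)}(u₁−u₂).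 -/
open CategoryTheory
open scoped BigOperators

namespace Stmt4

variable {C : Type} [Groupoid C] [Fintype C] [DecidableEq C]
  [∀ a b : C, Fintype (a ⟶ b)] [∀ a b : C, DecidableEq (a ⟶ b)]

/-- The set of arrows of the groupoid `C`. -/
abbrev Arr (C : Type) [Groupoid C] := Σ a b : C, a ⟶ b

def src (α : Arr C) : C := α.1
def tgt (α : Arr C) : C := α.2.1
/-- inverse arrow -/
def ainv (α : Arr C) : Arr C := ⟨α.2.1, α.1, Groupoid.inv α.2.2⟩
/-- composition of composable arrows -/
def acomp (α β : Arr C) (h : tgt α = src β) : Arr C :=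
  ⟨src α, tgt β, α.2.2 ≫ eqToHom h ≫ β.2.2⟩

/-- `IsSquare i j k l` : the arrows `i,j` (vertically composable) and `k,l` (vertically
composable) form a commutative square, i.e. `j∘i = l∘k` with matching endpoints. -/
def IsSquare (i j k l : Arr C) : Prop :=
  ∃ (h₁ : tgt i = src j) (h₂ : tgt k = src l),
    src i = src k ∧ tgt j = tgt l ∧ acomp i j h₁ = acomp k l h₂

variable {ι : Type} [Fintype ι] [DecidableEq ι]

/-!  π-graded vector spaces of finite type are encoded by a finite basis index type `ι`
with a degree map `deg : ι → Arr C`; the vector `e a` (a basis vector of `V`) has degree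
`deg a`, and the dual basis vector `f a` of the dual space `V*` has degree `(deg a)⁻¹`.
Operators are encoded by their matrices in these bases.  Since `V` and `V*` share the
index type `ι`, all the operators `Ř_{VV}, Ř_{V*V}, Ř_{VV*}, Ř_{V*V*}` are matrices
indexed by `ι × ι`.

The general linear rotation data consists of
* `ω  : V ⊗ V* → 𝟏`, with matrix `ω a b` (coefficient on `e a ⊗ f b`),
* `σm : 𝟏 → V* ⊗ V`, with coefficients `σm a b` (on `f a ⊗ e b`),
* `ωs : V* ⊗ V → 𝟏`, with matrix `ωs a b` (on `f a ⊗ e b`),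
* `σs : 𝟏 → V ⊗ V*`, with coefficients `σs a b` (on `e a ⊗ f b`),
* a function `G` on the objects of the groupoid. -/

/-- A matrix (on any of the four twofold tensor products) is a π-graded morphism iff its
entries are supported on commutative squares.  Convention: `R p q` is the matrix element
from the `q = (q.1, q.2)` component to the `p = (p.1, p.2)` component. -/
def GradedR (deg : ι → Arr C) (R : Matrix (ι × ι) (ι × ι) ℂ) : Prop :=
  ∀ p q, R p q ≠ 0 → IsSquare (deg q.1) (deg q.2) (deg p.1) (deg p.2)

/-- operator acting on the factors 1,2 of a threefold tensor product. -/
noncomputable def M12 (R : Matrix (ι × ι) (ι × ι) ℂ) :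
    Matrix (ι × ι × ι) (ι × ι × ι) ℂ :=
  fun p q => R (p.1, p.2.1) (q.1, q.2.1) * (if p.2.2 = q.2.2 then 1 else 0)

/-- operator acting on the factors 2,3 of a threefold tensor product. -/
noncomputable def M23 (R : Matrix (ι × ι) (ι × ι) ℂ) :
    Matrix (ι × ι × ι) (ι × ι × ι) ℂ :=
  fun p q => (if p.1 = q.1 then 1 else 0) * R (p.2.1, p.2.2) (q.2.1, q.2.2)

/-- `Ř_{VV*}(u) := (id⊗id⊗ω)(id⊗Ř_VV(λ−u)⊗id)(σ⊗id⊗id) : V⊗V* → V*⊗V`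
(rotation by 90°), written for a family `F` in place of `Ř_VV`. -/
noncomputable def rotHead (ω σm : ι → ι → ℂ) (F : ℂ → Matrix (ι × ι) (ι × ι) ℂ)
    (lam u : ℂ) : Matrix (ι × ι) (ι × ι) ℂ :=
  fun p q => ∑ b : ι, ∑ m : ι, σm p.1 b * F (lam - u) (p.2, m) (b, q.1) * ω m q.2

/-- `Ř_{V*V}(u) := (ω*⊗id⊗id)(id⊗Ř_VV(λ−u)⊗id)(id⊗id⊗σ*) : V*⊗V → V⊗V*`
(rotation by −90°), written for a family `F` in place of `Ř_VV`. -/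
noncomputable def rotTail (ωs σs : ι → ι → ℂ) (F : ℂ → Matrix (ι × ι) (ι × ι) ℂ)
    (lam u : ℂ) : Matrix (ι × ι) (ι × ι) ℂ :=
  fun p q => ∑ c : ι, ∑ m : ι, ωs q.1 m * F (lam - u) (m, p.1) (q.2, c) * σs c p.2

/-- `Ř_{VV*}(u) : V⊗V* → V*⊗V`, the rotation by 90° of `Ř_VV`. -/
noncomputable def RVVs (ω σm : ι → ι → ℂ) (Rm : ℂ → Matrix (ι × ι) (ι × ι) ℂ)
    (lam u : ℂ) : Matrix (ι × ι) (ι × ι) ℂ := rotHead ω σm Rm lam u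

/-- `Ř_{V*V}(u) : V*⊗V → V⊗V*`, the rotation by −90° of `Ř_VV`. -/
noncomputable def RVsV (ωs σs : ι → ι → ℂ) (Rm : ℂ → Matrix (ι × ι) (ι × ι) ℂ)
    (lam u : ℂ) : Matrix (ι × ι) (ι × ι) ℂ := rotTail ωs σs Rm lam u

/-- `Ř_{V*V*}(u) := (id⊗id⊗ω)(id⊗Ř_{VV*}(λ−u)⊗id)(σ⊗id⊗id) : V*⊗V* → V*⊗V*`,
the rotation by 180° of `Ř_VV`. -/
noncomputable def RVsVs (ω σm : ι → ι → ℂ) (Rm : ℂ → Matrix (ι × ι) (ι × ι) ℂ)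
    (lam u : ℂ) : Matrix (ι × ι) (ι × ι) ℂ :=
  rotHead ω σm (fun v => RVVs ω σm Rm lam v) lam u

set_option linter.unusedSectionVars false
set_option linter.unusedVariables false

-- auxiliary: single-matrix rotations
noncomputable def rtm (ωs σs : ι → ι → ℂ) (M : Matrix (ι × ι) (ι × ι) ℂ) :
    Matrix (ι × ι) (ι × ι) ℂ :=
  fun p q => ∑ c : ι, ∑ m : ι, ωs q.1 m * M (m, p.1) (q.2, c) * σs c p.2

noncomputable def rhm (ω σm : ι → ι → ℂ) (M : Matrix (ι × ι) (ι × ι) ℂ) :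
    Matrix (ι × ι) (ι × ι) ℂ :=
  fun p q => ∑ b : ι, ∑ m : ι, σm p.1 b * M (p.2, m) (b, q.1) * ω m q.2

lemma sum3_rev {M : Type*} [AddCommMonoid M] (f : ι → ι → ι → M) :
    (∑ a : ι, ∑ b : ι, ∑ c : ι, f a b c) = ∑ c : ι, ∑ b : ι, ∑ a : ι, f a b c :=
  calc (∑ a : ι, ∑ b : ι, ∑ c : ι, f a b c) = ∑ b : ι, ∑ a : ι, ∑ c : ι, f a b c :=
        Finset.sum_comm
    _ = ∑ b : ι, ∑ c : ι, ∑ a : ι, f a b c :=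
        Finset.sum_congr rfl fun _ _ => Finset.sum_comm
    _ = ∑ c : ι, ∑ b : ι, ∑ a : ι, f a b c := Finset.sum_comm

lemma tripleA (A B Cc : Matrix (ι × ι) (ι × ι) ℂ) (p q : ι × ι × ι) :
    (M23 A * M12 B * M23 Cc) p q
      = ∑ x : ι, ∑ y : ι, ∑ z : ι,
          A (p.2.1, p.2.2) (x, y) * (B (p.1, x) (q.1, z) * Cc (z, y) (q.2.1, q.2.2)) := by
  simp only [Matrix.mul_apply, M12, M23, Fintype.sum_prod_type]
  simp [Finset.sum_mul, Finset.mul_sum, mul_ite, ite_mul, mul_zero, zero_mul,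
    Finset.sum_ite_eq, Finset.sum_ite_eq', mul_assoc]
  exact (sum3_rev _).symm

lemma tripleB (A B Cc : Matrix (ι × ι) (ι × ι) ℂ) (p q : ι × ι × ι) :
    (M12 A * M23 B * M12 Cc) p q
      = ∑ x : ι, ∑ y : ι, ∑ z : ι,
          A (p.1, p.2.1) (x, y) * (B (y, p.2.2) (z, q.2.2) * Cc (x, z) (q.1, q.2.1)) := by
  simp only [Matrix.mul_apply, M12, M23, Fintype.sum_prod_type]
  simp [Finset.sum_mul, Finset.mul_sum, mul_ite, ite_mul, mul_zero, zero_mul,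
    Finset.sum_ite_eq, Finset.sum_ite_eq', mul_assoc]
  exact Finset.sum_congr rfl fun x _ => Finset.sum_comm

lemma collapse (a s : ι → ι → ℂ)
    (hz : ∀ d m, (∑ x, s d x * a x m) = if d = m then (1:ℂ) else 0)
    (m : ι) (g : ι → ℂ) :
    (∑ d, ∑ x, (s d x * a x m) * g d) = g m := by
  have h : ∀ d, (∑ x, (s d x * a x m) * g d) = (if d = m then (1:ℂ) else 0) * g d := by
    intro d; rw [← Finset.sum_mul, hz]
  rw [Finset.sum_congr rfl fun d _ => h d]
  simp [ite_mul, Finset.sum_ite_eq']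


abbrev T7 (ι : Type) := ι × ι × ι × ι × ι × ι × ι

lemma sum7 {M : Type*} [AddCommMonoid M] (f : ι → ι → ι → ι → ι → ι → ι → M) :
    (∑ t : T7 ι, f t.1 t.2.1 t.2.2.1 t.2.2.2.1 t.2.2.2.2.1 t.2.2.2.2.2.1 t.2.2.2.2.2.2)
      = ∑ a, ∑ b, ∑ c, ∑ d, ∑ e, ∑ g, ∑ h, f a b c d e g h := by
  simp [Fintype.sum_prod_type]

def e7 : T7 ι ≃ T7 ι where
  toFun t := (t.2.2.2.2.1, t.2.2.2.2.2.1, t.2.2.1, t.2.2.2.2.2.2, t.2.1, t.2.2.2.1, t.1)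
  invFun u := (u.2.2.2.2.2.2, u.2.2.2.2.1, u.2.2.1, u.2.2.2.2.2.1, u.1, u.2.1, u.2.2.2.1)
  left_inv t := rfl
  right_inv t := rfl

lemma sub1gen (a s : ι → ι → ℂ)
    (hz : ∀ d m, (∑ x, s d x * a x m) = if d = m then (1:ℂ) else 0)
    (F G : ι → ι → ι → ℂ) (H : ι → ι → ℂ) (w v : ι → ℂ) :
    (∑ x, ∑ y, ∑ z, (∑ c, ∑ m, a x m * F m y c * v c)
        * ((∑ d, ∑ n, w n * G n z d * s d x) * H z y))
      = ∑ n, ∑ c, w n * v c * (∑ x, ∑ y, ∑ z, G n x y * (F y z c * H x z)) := by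
  -- flatten LHS
  have hL : (∑ x, ∑ y, ∑ z, (∑ c, ∑ m, a x m * F m y c * v c)
        * ((∑ d, ∑ n, w n * G n z d * s d x) * H z y))
      = ∑ x, ∑ y, ∑ z, ∑ d, ∑ n, ∑ c, ∑ m,
          a x m * F m y c * v c * (w n * G n z d * s d x * H z y) := by
    simp only [Finset.sum_mul, Finset.mul_sum]
  -- un-collapse RHS
  have hG : ∀ n Z m, G n Z m = ∑ d, ∑ x, (s d x * a x m) * G n Z d := by
    intro n Z m; exact (collapse a s hz m (fun d => G n Z d)).symm
  have hR : (∑ n, ∑ c, w n * v c * (∑ x, ∑ y, ∑ z, G n x y * (F y z c * H x z)))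
      = ∑ n, ∑ c, ∑ Z, ∑ m, ∑ y, ∑ d, ∑ x,
          w n * v c * (((s d x * a x m) * G n Z d) * (F m y c * H Z y)) := by
    refine Finset.sum_congr rfl fun n _ => Finset.sum_congr rfl fun c _ => ?_
    rw [Finset.mul_sum]
    refine Finset.sum_congr rfl fun Z _ => ?_
    rw [Finset.mul_sum]
    refine Finset.sum_congr rfl fun m _ => ?_
    rw [Finset.mul_sum]
    refine Finset.sum_congr rfl fun y _ => ?_
    rw [hG n Z m, Finset.sum_mul, Finset.mul_sum]
    refine Finset.sum_congr rfl fun d _ => ?_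
    rw [Finset.sum_mul, Finset.mul_sum]
  rw [hL, hR]
  rw [← sum7 (fun x y z d n c m =>
        a x m * F m y c * v c * (w n * G n z d * s d x * H z y))]
  rw [← sum7 (fun n c Z m y d x =>
        w n * v c * (((s d x * a x m) * G n Z d) * (F m y c * H Z y)))]
  refine Fintype.sum_equiv e7 _ _ ?_
  rintro ⟨x, y, z, d, n, c, m⟩
  show a x m * F m y c * v c * (w n * G n z d * s d x * H z y)
      = w n * v c * (((s d x * a x m) * G n z d) * (F m y c * H z y))
  ring

def e8 : T7 ι ≃ T7 ι where
  toFun t := (t.2.2.2.2.1, t.2.2.2.2.2.1, t.1, t.2.1, t.2.2.2.2.2.2, t.2.2.2.1, t.2.2.1)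
  invFun u := (u.2.2.1, u.2.2.2.1, u.2.2.2.2.2.2, u.2.2.2.2.2.1, u.1, u.2.1, u.2.2.2.2.1)
  left_inv _ := rfl
  right_inv _ := rfl

lemma sub2gen (a s : ι → ι → ℂ)
    (hz : ∀ d m, (∑ x, s d x * a x m) = if d = m then (1:ℂ) else 0)
    (F G : ι → ι → ι → ℂ) (K : ι → ι → ℂ) (w v : ι → ℂ) :
    (∑ x, ∑ y, ∑ z, K x y * ((∑ d, ∑ n, a z n * G n y d * v d)
        * (∑ c, ∑ m, w m * F m x c * s c z)))
      = ∑ n, ∑ c, w n * v c * (∑ x, ∑ y, ∑ z, K x y * (F n x z * G z y c)) := by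
  have hL : (∑ x, ∑ y, ∑ z, K x y * ((∑ d, ∑ n, a z n * G n y d * v d)
        * (∑ c, ∑ m, w m * F m x c * s c z)))
      = ∑ x, ∑ y, ∑ z, ∑ c, ∑ m, ∑ d, ∑ n,
          K x y * (a z n * G n y d * v d * (w m * F m x c * s c z)) := by
    simp only [Finset.sum_mul, Finset.mul_sum]
  have inner : ∀ n c x y z,
      (∑ c', ∑ Z, w n * v c * (K x y * (((s c' Z * a Z z) * F n x c') * G z y c)))
        = w n * v c * (K x y * (F n x z * G z y c)) := by
    intro n c x y z
    calc (∑ c', ∑ Z, w n * v c * (K x y * (((s c' Z * a Z z) * F n x c') * G z y c)))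
        = ∑ c', ∑ Z, (s c' Z * a Z z)
            * (w n * v c * (K x y * (F n x c' * G z y c))) :=
          Finset.sum_congr rfl fun c' _ => Finset.sum_congr rfl fun Z _ => by ring
      _ = w n * v c * (K x y * (F n x z * G z y c)) := collapse a s hz z _
  have hR : (∑ n, ∑ c, ∑ x, ∑ y, ∑ z, ∑ c', ∑ Z,
          w n * v c * (K x y * (((s c' Z * a Z z) * F n x c') * G z y c)))
      = ∑ n, ∑ c, w n * v c * (∑ x, ∑ y, ∑ z, K x y * (F n x z * G z y c)) := by
    refine Finset.sum_congr rfl fun n _ => Finset.sum_congr rfl fun c _ => ?_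
    calc (∑ x, ∑ y, ∑ z, ∑ c', ∑ Z,
            w n * v c * (K x y * (((s c' Z * a Z z) * F n x c') * G z y c)))
        = ∑ x, ∑ y, ∑ z, w n * v c * (K x y * (F n x z * G z y c)) :=
          Finset.sum_congr rfl fun x _ => Finset.sum_congr rfl fun y _ =>
            Finset.sum_congr rfl fun z _ => inner n c x y z
      _ = w n * v c * (∑ x, ∑ y, ∑ z, K x y * (F n x z * G z y c)) := by
          simp only [Finset.mul_sum]
  rw [hL, ← hR]
  rw [← sum7 (fun x y z c m d n =>
        K x y * (a z n * G n y d * v d * (w m * F m x c * s c z)))]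
  rw [← sum7 (fun n c x y z c' Z =>
        w n * v c * (K x y * (((s c' Z * a Z z) * F n x c') * G z y c)))]
  refine Fintype.sum_equiv e8 _ _ ?_
  rintro ⟨x, y, z, c, m, d, n⟩
  show K x y * (a z n * G n y d * v d * (w m * F m x c * s c z))
      = w m * v d * (K x y * (((s c z * a z n) * F m x c) * G n y d))
  ring

lemma bend (ωs σs : ι → ι → ℂ)
    (hz3 : ∀ a c, (∑ b, σs a b * ωs b c) = if a = c then (1:ℂ) else 0)
    (X Y Z : Matrix (ι × ι) (ι × ι) ℂ)
    (hybe : M23 Z * M12 X * M23 Y = M12 Y * M23 X * M12 Z) :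
    M23 (rtm ωs σs X) * M12 (rtm ωs σs Y) * M23 Z
      = M12 Z * M23 (rtm ωs σs Y) * M12 (rtm ωs σs X) := by
  ext p q
  obtain ⟨p1, p2, p3⟩ := p
  obtain ⟨q1, q2, q3⟩ := q
  rw [tripleA, tripleB]
  have key : ∀ n c : ι,
      (∑ x : ι, ∑ y : ι, ∑ z : ι, Y (n, p1) (x, y) * (X (y, p2) (z, c) * Z (x, z) (q2, q3)))
        = ∑ x : ι, ∑ y : ι, ∑ z : ι, Z (p1, p2) (x, y) * (X (n, x) (q2, z) * Y (z, y) (q3, c)) := by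
    intro n c
    have h := congrFun (congrFun hybe (n, p1, p2)) (q2, q3, c)
    rw [tripleA, tripleB] at h
    exact h.symm
  have e1 := sub1gen ωs σs hz3 (fun m y c => X (m, p2) (y, c)) (fun n z d => Y (n, p1) (z, d))
      (fun z y => Z (z, y) (q2, q3)) (fun n => ωs q1 n) (fun c => σs c p3)
  have e2 := sub2gen ωs σs hz3 (fun m x c => X (m, x) (q2, c)) (fun n y d => Y (n, y) (q3, d))
      (fun x y => Z (p1, p2) (x, y)) (fun m => ωs q1 m) (fun d => σs d p3)
  calc (∑ x : ι, ∑ y : ι, ∑ z : ι, rtm ωs σs X (p2, p3) (x, y)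
          * (rtm ωs σs Y (p1, x) (q1, z) * Z (z, y) (q2, q3)))
      = ∑ n, ∑ c, ωs q1 n * σs c p3
          * (∑ x : ι, ∑ y : ι, ∑ z : ι, Y (n, p1) (x, y) * (X (y, p2) (z, c) * Z (x, z) (q2, q3))) := e1
    _ = ∑ n, ∑ c, ωs q1 n * σs c p3
          * (∑ x : ι, ∑ y : ι, ∑ z : ι, Z (p1, p2) (x, y) * (X (n, x) (q2, z) * Y (z, y) (q3, c))) :=
        Finset.sum_congr rfl fun n _ => Finset.sum_congr rfl fun c _ => by rw [key n c]
    _ = ∑ x : ι, ∑ y : ι, ∑ z : ι, Z (p1, p2) (x, y)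
          * (rtm ωs σs Y (y, p3) (z, q3) * rtm ωs σs X (x, z) (q1, q2)) := e2.symm

lemma sigma_eq (deg : ι → Arr C) (ω σm ωs σs : ι → ι → ℂ) (G : C → ℂ)
    (hG : ∀ x, G x ≠ 0)
    (hzig2 : ∀ a c, (∑ b, ω a b * σm b c) = if a = c then (1 : ℂ) else 0)
    (hωs : ∀ a b, ωs a b = G (src (deg a)) / G (tgt (deg a)) * ω b a)
    (hzig4 : ∀ a c, (∑ b, ωs a b * σs b c) = if a = c then (1 : ℂ) else 0) :
    ∀ a b, σs a b = G (tgt (deg b)) / G (src (deg b)) * σm b a := by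
  set σs' : ι → ι → ℂ := fun a b => G (tgt (deg b)) / G (src (deg b)) * σm b a with hσs'
  have key1 : ∀ a d, (∑ c, σs' a c * ωs c d) = if a = d then (1 : ℂ) else 0 := by
    intro a d
    have h1 : ∀ c : ι, σs' a c * ωs c d = ω d c * σm c a := by
      intro c
      rw [hσs', hωs]
      have h2 := hG (src (deg c)); have h3 := hG (tgt (deg c))
      field_simp
    rw [Finset.sum_congr rfl fun c _ => h1 c, hzig2 d a]
    by_cases h : a = d
    · simp [h]
    · simp [h, Ne.symm h]
  intro a b
  calc σs a b = ∑ d, (if a = d then (1 : ℂ) else 0) * σs d b := by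
        simp [ite_mul, Finset.sum_ite_eq]
    _ = ∑ d, (∑ c, σs' a c * ωs c d) * σs d b :=
        Finset.sum_congr rfl fun d _ => by rw [key1 a d]
    _ = ∑ c, σs' a c * (∑ d, ωs c d * σs d b) := by
        simp only [Finset.sum_mul]
        rw [Finset.sum_comm]
        exact Finset.sum_congr rfl fun c _ => by
          rw [Finset.mul_sum]
          exact Finset.sum_congr rfl fun d _ => by ring
    _ = ∑ c, σs' a c * (if c = b then (1 : ℂ) else 0) :=
        Finset.sum_congr rfl fun c _ => by rw [hzig4 c b]
    _ = σs' a b := by simp [mul_ite, Finset.sum_ite_eq']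

lemma sum4 {M : Type*} [AddCommMonoid M] (f : ι → ι → ι → ι → M) :
    (∑ t : ι × ι × ι × ι, f t.1 t.2.1 t.2.2.1 t.2.2.2)
      = ∑ a, ∑ b, ∑ c, ∑ d, f a b c d := by
  simp [Fintype.sum_prod_type]

def e4 : (ι × ι × ι × ι) ≃ (ι × ι × ι × ι) where
  toFun t := (t.2.2.1, t.2.2.2, t.1, t.2.1)
  invFun u := (u.2.2.1, u.2.2.2, u.1, u.2.1)
  left_inv _ := rfl
  right_inv _ := rfl

lemma lemC (deg : ι → Arr C) (ω σm ωs σs : ι → ι → ℂ) (G : C → ℂ)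
    (hG : ∀ x, G x ≠ 0)
    (hωgr : ∀ a b, ω a b ≠ 0 → deg b = deg a)
    (hσgr : ∀ a b, σm a b ≠ 0 → deg b = deg a)
    (hωs : ∀ a b, ωs a b = G (src (deg a)) / G (tgt (deg a)) * ω b a)
    (hσs : ∀ a b, σs a b = G (tgt (deg b)) / G (src (deg b)) * σm b a)
    (M : Matrix (ι × ι) (ι × ι) ℂ) (hM : GradedR deg M) :
    rhm ω σm (rhm ω σm M) = rtm ωs σs (rtm ωs σs M) := by
  ext p q
  obtain ⟨p1, p2⟩ := p
  obtain ⟨q1, q2⟩ := q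
  have key : ∀ b m b' m',
      σm p1 b * (σm p2 b' * M (m, m') (b', b) * ω m' q1) * ω m q2
        = ωs q1 m' * (ωs q2 m * M (m, m') (b', b) * σs b p1) * σs b' p2 := by
    intro b m b' m'
    rw [hωs q1 m', hωs q2 m, hσs b p1, hσs b' p2]
    by_cases h3 : M (m, m') (b', b) = 0
    · simp [h3]
    by_cases h1 : σm p1 b = 0
    · simp [h1]
    by_cases h2 : σm p2 b' = 0
    · simp [h2]
    by_cases h4 : ω m' q1 = 0
    · simp [h4]
    by_cases h5 : ω m q2 = 0
    · simp [h5]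
    have d1 : deg b = deg p1 := hσgr _ _ h1
    have d2 : deg b' = deg p2 := hσgr _ _ h2
    have d4 : deg q1 = deg m' := hωgr _ _ h4
    have d5 : deg q2 = deg m := hωgr _ _ h5
    obtain ⟨hc1, hc2, hs, ht, -⟩ := hM (m, m') (b', b) h3
    rw [d4, d5, ← d1, ← d2, ht, hc1, hs, hc2]
    have n1 := hG (src (deg m'))
    have n2 := hG (tgt (deg m'))
    have n3 := hG (src (deg m))
    have n4 := hG (src (deg b))
    field_simp
  show (∑ b, ∑ m, σm p1 b * (rhm ω σm M) (p2, m) (b, q1) * ω m q2)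
      = ∑ c, ∑ m, ωs q1 m * (rtm ωs σs M) (m, p1) (q2, c) * σs c p2
  have hL : (∑ b, ∑ m, σm p1 b * (rhm ω σm M) (p2, m) (b, q1) * ω m q2)
      = ∑ b, ∑ m, ∑ b', ∑ m',
          σm p1 b * (σm p2 b' * M (m, m') (b', b) * ω m' q1) * ω m q2 := by
    refine Finset.sum_congr rfl fun b _ => Finset.sum_congr rfl fun m _ => ?_
    show σm p1 b * (∑ b', ∑ m', σm p2 b' * M (m, m') (b', b) * ω m' q1) * ω m q2 = _
    rw [Finset.mul_sum, Finset.sum_mul]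
    refine Finset.sum_congr rfl fun b' _ => ?_
    rw [Finset.mul_sum, Finset.sum_mul]
  have hR : (∑ c, ∑ m, ωs q1 m * (rtm ωs σs M) (m, p1) (q2, c) * σs c p2)
      = ∑ c, ∑ m, ∑ c', ∑ m',
          ωs q1 m * (ωs q2 m' * M (m', m) (c, c') * σs c' p1) * σs c p2 := by
    refine Finset.sum_congr rfl fun c _ => Finset.sum_congr rfl fun m _ => ?_
    show ωs q1 m * (∑ c', ∑ m', ωs q2 m' * M (m', m) (c, c') * σs c' p1) * σs c p2 = _
    rw [Finset.mul_sum, Finset.sum_mul]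
    refine Finset.sum_congr rfl fun c' _ => ?_
    rw [Finset.mul_sum, Finset.sum_mul]
  rw [hL, hR]
  rw [← sum4 (fun b m b' m' =>
        σm p1 b * (σm p2 b' * M (m, m') (b', b) * ω m' q1) * ω m q2)]
  rw [← sum4 (fun c m c' m' =>
        ωs q1 m * (ωs q2 m' * M (m', m) (c, c') * σs c' p1) * σs c p2)]
  refine Fintype.sum_equiv e4 _ _ ?_
  rintro ⟨b, m, b', m'⟩
  show σm p1 b * (σm p2 b' * M (m, m') (b', b) * ω m' q1) * ω m q2
      = ωs q1 m' * (ωs q2 m * M (m, m') (b', b) * σs b p1) * σs b' p2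
  exact key b m b' m'


/-- mixed Yang–Baxter equations for the rotations:  if `Ř_VV(u)` is an
R-matrix on `V` (satisfying the Yang–Baxter equation for generic parameters, together with
the inversion relation), then its rotations satisfy for generic `u₁, u₂`:
`Ř_{V*V}^{(23)}(u₁−u₂)Ř_{V*V}^{(12)}(u₁)Ř_VV^{(23)}(u₂)
   = Ř_VV^{(12)}(u₂)Ř_{V*V}^{(23)}(u₁)Ř_{V*V}^{(12)}(u₁−u₂)` and
`Ř_{V*V*}^{(23)}(u₁−u₂)Ř_{V*V}^{(12)}(u₁)Ř_{V*V}^{(23)}(u₂)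
   = Ř_{V*V}^{(12)}(u₂)Ř_{V*V}^{(23)}(u₁)Ř_{V*V*}^{(12)}(u₁−u₂)`. -/
theorem mixed_yang_baxter_for_rotations
    (deg : ι → Arr C) (Rm : ℂ → Matrix (ι × ι) (ι × ι) ℂ)
    (ω σm ωs σs : ι → ι → ℂ) (G : C → ℂ) (lam : ℂ)
    -- each `Ř_VV(u)` is a morphism of π-graded vector spaces,
    -- with meromorphic matrix entries
    (hRgr : ∀ u, GradedR deg (Rm u))
    (hMero : ∀ p q, MeromorphicOn (fun u => Rm u p q) Set.univ)
    -- grading supports of the duality data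
    (hωgr : ∀ a b, ω a b ≠ 0 → deg b = deg a)
    (hσgr : ∀ a b, σm a b ≠ 0 → deg b = deg a)
    (hωsgr : ∀ a b, ωs a b ≠ 0 → deg b = deg a)
    (hσsgr : ∀ a b, σs a b ≠ 0 → deg b = deg a)
    -- ω nondegenerate with dual σ
    (hzig1 : ∀ a c, (∑ b, σm a b * ω b c) = if a = c then (1 : ℂ) else 0)
    (hzig2 : ∀ a c, (∑ b, ω a b * σm b c) = if a = c then (1 : ℂ) else 0)
    -- G with values in ℂ^×, defining ω*
    (hG : ∀ x, G x ≠ 0)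
    (hωs : ∀ a b, ωs a b = G (src (deg a)) / G (tgt (deg a)) * ω b a)
    -- σ* dual to ω*
    (hzig3 : ∀ a c, (∑ b, σs a b * ωs b c) = if a = c then (1 : ℂ) else 0)
    (hzig4 : ∀ a c, (∑ b, ωs a b * σs b c) = if a = c then (1 : ℂ) else 0)
    -- exceptional set of non-generic parameters
    (E : Set ℂ) (hE : E.Countable)
    -- `Ř_VV` satisfies the Yang–Baxter equation and the inversion relation
    (hYBE : ∀ u v : ℂ, u ∉ E → v ∉ E → u - v ∉ E →
      M23 (Rm (u - v)) * M12 (Rm u) * M23 (Rm v)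
        = M12 (Rm v) * M23 (Rm u) * M12 (Rm (u - v)))
    (hinv : ∀ u : ℂ, u ∉ E → -u ∉ E → Rm u * Rm (-u) = 1) :
    ∃ E' : Set ℂ, E'.Countable ∧
      ∀ u₁ u₂ : ℂ, u₁ ∉ E' → u₂ ∉ E' → u₁ - u₂ ∉ E' →
        (M23 (RVsV ωs σs Rm lam (u₁ - u₂)) * M12 (RVsV ωs σs Rm lam u₁) * M23 (Rm u₂)
          = M12 (Rm u₂) * M23 (RVsV ωs σs Rm lam u₁) * M12 (RVsV ωs σs Rm lam (u₁ - u₂)))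
        ∧ (M23 (RVsVs ω σm Rm lam (u₁ - u₂)) * M12 (RVsV ωs σs Rm lam u₁)
              * M23 (RVsV ωs σs Rm lam u₂)
            = M12 (RVsV ωs σs Rm lam u₂) * M23 (RVsV ωs σs Rm lam u₁)
              * M12 (RVsVs ω σm Rm lam (u₁ - u₂))) := by
  classical
  have hσsf : ∀ a b, σs a b = G (tgt (deg b)) / G (src (deg b)) * σm b a :=
    sigma_eq deg ω σm ωs σs G hG hzig2 hωs hzig4
  refine ⟨E ∪ (fun z => lam - z) '' E, hE.union (hE.image _), ?_⟩
  intro u₁ u₂ h1 h2 h12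
  have hmem : ∀ z : ℂ, z ∉ E ∪ (fun z => lam - z) '' E → z ∉ E ∧ lam - z ∉ E := by
    intro z hz
    refine ⟨fun h => hz (Or.inl h), fun h => hz (Or.inr ⟨lam - z, h, by ring⟩)⟩
  obtain ⟨h1E, h1L⟩ := hmem _ h1
  obtain ⟨h2E, h2L⟩ := hmem _ h2
  obtain ⟨h12E, h12L⟩ := hmem _ h12
  have harg1 : lam - (u₁ - u₂) - (lam - u₁) = u₂ := by ring
  have ybe1 := hYBE (lam - (u₁ - u₂)) (lam - u₁) h12L h1L (by rw [harg1]; exact h2E)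
  rw [harg1] at ybe1
  have step1 := bend ωs σs hzig3 (Rm (lam - (u₁ - u₂))) (Rm (lam - u₁)) (Rm u₂) ybe1
  have harg2 : lam - u₂ - (u₁ - u₂) = lam - u₁ := by ring
  have ybe2 := hYBE (lam - u₂) (u₁ - u₂) h2L h12E (by rw [harg2]; exact h1L)
  rw [harg2] at ybe2
  have step2 := bend ωs σs hzig3 (Rm (lam - u₂)) (Rm (u₁ - u₂)) (Rm (lam - u₁)) ybe2
  have step3 := bend ωs σs hzig3 (rtm ωs σs (Rm (u₁ - u₂))) (Rm (lam - u₁))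
      (rtm ωs σs (Rm (lam - u₂))) step2
  have hC : RVsVs ω σm Rm lam (u₁ - u₂) = rtm ωs σs (rtm ωs σs (Rm (u₁ - u₂))) := by
    have h0 : RVsVs ω σm Rm lam (u₁ - u₂)
        = rhm ω σm (rhm ω σm (Rm (lam - (lam - (u₁ - u₂))))) := rfl
    rw [h0, show lam - (lam - (u₁ - u₂)) = u₁ - u₂ from by ring]
    exact lemC deg ω σm ωs σs G hG hωgr hσgr hωs hσsf (Rm (u₁ - u₂)) (hRgr _)
  refine ⟨step1, ?_⟩
  rw [hC]
  exact step3


end Stmt4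
end

section
/- In the general linear rotation setting, if the R-matrix Ř_VV(u) (satisfying the Yang–Baxter equation and the inversion relation Ř_VV(u)Ř_VV(−u) = Id) is crossing symmetric with crossing parameter λ and meromorphic function α, then the inversion identities Ř_{VV*}(−u)Ř_{V*V}(u) = α(u)·Id_{V*⊗V} and Ř_{V*V}(u)Ř_{VV*}(−u) = α(u)·Id_{V⊗V*} hold for generic u. -/
open CategoryTheory
open scoped BigOperators

namespace Stmt5

variable {C : Type} [Groupoid C] [Fintype C] [DecidableEq C]
  [∀ a b : C, Fintype (a ⟶ b)] [∀ a b : C, DecidableEq (a ⟶ b)]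

/-- The set of arrows of the groupoid `C`. -/
abbrev Arr (C : Type) [Groupoid C] := Σ a b : C, a ⟶ b

def src (α : Arr C) : C := α.1
def tgt (α : Arr C) : C := α.2.1
/-- inverse arrow -/
def ainv (α : Arr C) : Arr C := ⟨α.2.1, α.1, Groupoid.inv α.2.2⟩
/-- composition of composable arrows -/
def acomp (α β : Arr C) (h : tgt α = src β) : Arr C :=
  ⟨src α, tgt β, α.2.2 ≫ eqToHom h ≫ β.2.2⟩

/-- `IsSquare i j k l` : the arrows `i,j` (vertically composable) and `k,l` (vertically
composable) form a commutative square, i.e. `j∘i = l∘k` with matching endpoints. -/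
def IsSquare (i j k l : Arr C) : Prop :=
  ∃ (h₁ : tgt i = src j) (h₂ : tgt k = src l),
    src i = src k ∧ tgt j = tgt l ∧ acomp i j h₁ = acomp k l h₂

variable {ι : Type} [Fintype ι] [DecidableEq ι]

/-!  π-graded vector spaces of finite type are encoded by a finite basis index type `ι`
with a degree map `deg : ι → Arr C`; the vector `e a` (a basis vector of `V`) has degree
`deg a`, and the dual basis vector `f a` of the dual space `V*` has degree `(deg a)⁻¹`.
Operators are encoded by their matrices in these bases.  Since `V` and `V*` share the
index type `ι`, all the operators `Ř_{VV}, Ř_{V*V}, Ř_{VV*}, Ř_{V*V*}` are matrices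
indexed by `ι × ι`.

The general linear rotation data consists of
* `ω  : V ⊗ V* → 𝟏`, with matrix `ω a b` (coefficient on `e a ⊗ f b`),
* `σm : 𝟏 → V* ⊗ V`, with coefficients `σm a b` (on `f a ⊗ e b`),
* `ωs : V* ⊗ V → 𝟏`, with matrix `ωs a b` (on `f a ⊗ e b`),
* `σs : 𝟏 → V ⊗ V*`, with coefficients `σs a b` (on `e a ⊗ f b`),
* a function `G` on the objects of the groupoid. -/

/-- A matrix (on any of the four twofold tensor products) is a π-graded morphism iff its
entries are supported on commutative squares.  Convention: `R p q` is the matrix element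
from the `q = (q.1, q.2)` component to the `p = (p.1, p.2)` component. -/
def GradedR (deg : ι → Arr C) (R : Matrix (ι × ι) (ι × ι) ℂ) : Prop :=
  ∀ p q, R p q ≠ 0 → IsSquare (deg q.1) (deg q.2) (deg p.1) (deg p.2)

/-- operator acting on the factors 1,2 of a threefold tensor product. -/
noncomputable def M12 (R : Matrix (ι × ι) (ι × ι) ℂ) :
    Matrix (ι × ι × ι) (ι × ι × ι) ℂ :=
  fun p q => R (p.1, p.2.1) (q.1, q.2.1) * (if p.2.2 = q.2.2 then 1 else 0)

/-- operator acting on the factors 2,3 of a threefold tensor product. -/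
noncomputable def M23 (R : Matrix (ι × ι) (ι × ι) ℂ) :
    Matrix (ι × ι × ι) (ι × ι × ι) ℂ :=
  fun p q => (if p.1 = q.1 then 1 else 0) * R (p.2.1, p.2.2) (q.2.1, q.2.2)

/-- `Ř_{VV*}(u) := (id⊗id⊗ω)(id⊗Ř_VV(λ−u)⊗id)(σ⊗id⊗id) : V⊗V* → V*⊗V`
(rotation by 90°), written for a family `F` in place of `Ř_VV`. -/
noncomputable def rotHead (ω σm : ι → ι → ℂ) (F : ℂ → Matrix (ι × ι) (ι × ι) ℂ)
    (lam u : ℂ) : Matrix (ι × ι) (ι × ι) ℂ :=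
  fun p q => ∑ b : ι, ∑ m : ι, σm p.1 b * F (lam - u) (p.2, m) (b, q.1) * ω m q.2

/-- `Ř_{V*V}(u) := (ω*⊗id⊗id)(id⊗Ř_VV(λ−u)⊗id)(id⊗id⊗σ*) : V*⊗V → V⊗V*`
(rotation by −90°), written for a family `F` in place of `Ř_VV`. -/
noncomputable def rotTail (ωs σs : ι → ι → ℂ) (F : ℂ → Matrix (ι × ι) (ι × ι) ℂ)
    (lam u : ℂ) : Matrix (ι × ι) (ι × ι) ℂ :=
  fun p q => ∑ c : ι, ∑ m : ι, ωs q.1 m * F (lam - u) (m, p.1) (q.2, c) * σs c p.2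

/-- `Ř_{VV*}(u) : V⊗V* → V*⊗V`, the rotation by 90° of `Ř_VV`. -/
noncomputable def RVVs (ω σm : ι → ι → ℂ) (Rm : ℂ → Matrix (ι × ι) (ι × ι) ℂ)
    (lam u : ℂ) : Matrix (ι × ι) (ι × ι) ℂ := rotHead ω σm Rm lam u

/-- `Ř_{V*V}(u) : V*⊗V → V⊗V*`, the rotation by −90° of `Ř_VV`. -/
noncomputable def RVsV (ωs σs : ι → ι → ℂ) (Rm : ℂ → Matrix (ι × ι) (ι × ι) ℂ)
    (lam u : ℂ) : Matrix (ι × ι) (ι × ι) ℂ := rotTail ωs σs Rm lam u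

/-- `Ř_{V*V*}(u) := (id⊗id⊗ω)(id⊗Ř_{VV*}(λ−u)⊗id)(σ⊗id⊗id) : V*⊗V* → V*⊗V*`,
the rotation by 180° of `Ř_VV`. -/
noncomputable def RVsVs (ω σm : ι → ι → ℂ) (Rm : ℂ → Matrix (ι × ι) (ι × ι) ℂ)
    (lam u : ℂ) : Matrix (ι × ι) (ι × ι) ℂ :=
  rotHead ω σm (fun v => RVVs ω σm Rm lam v) lam u

/-- the map `ω : V⊗V* → 𝟏` contracting the factors 2,3 of a threefold tensor product. -/
noncomputable def Om23 (ω : ι → ι → ℂ) : Matrix ι (ι × ι × ι) ℂ :=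
  fun a q => (if a = q.1 then 1 else 0) * ω q.2.1 q.2.2

/-- the map `ω : V⊗V* → 𝟏` contracting the factors 1,2 of a threefold tensor product. -/
noncomputable def Om12 (ω : ι → ι → ℂ) : Matrix ι (ι × ι × ι) ℂ :=
  fun a q => ω q.1 q.2.1 * (if a = q.2.2 then 1 else 0)

/-- the map `σ : 𝟏 → V*⊗V` inserted in the factors 1,2. -/
noncomputable def Sg12 (σ : ι → ι → ℂ) : Matrix (ι × ι × ι) ι ℂ :=
  fun p a => σ p.1 p.2.1 * (if p.2.2 = a then 1 else 0)

/-- the map `σ : 𝟏 → V*⊗V` inserted in the factors 2,3. -/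
noncomputable def Sg23 (σ : ι → ι → ℂ) : Matrix (ι × ι × ι) ι ℂ :=
  fun p a => (if p.1 = a then 1 else 0) * σ p.2.1 p.2.2

/-! Both identities are contractions of the crossing relations with the duality data.
Since `λ - (-u) = u + λ`, `Ř_{VV*}(-u)` is `ω^{(23)} Ř_VV^{(12)}(u+λ)` preceded by `σ`, so
precomposing the first crossing relation with `σ` turns its left side into
`Ř_{VV*}(-u) Ř_{V*V}(u)` and its right side into `α(u)` times a zigzag, i.e. `α(u)`.
Dually, following the second crossing relation by `ω` on its last two factors gives
`Ř_{V*V}(u) Ř_{VV*}(-u) = α(u)`. -/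

lemma Om23_mul_M12_mul_M23_apply (ω : ι → ι → ℂ) (R X : Matrix (ι × ι) (ι × ι) ℂ)
    (a b c d : ι) :
    (Om23 ω * M12 R * M23 X) a (b, c, d)
      = ∑ x, ∑ y, (∑ m, ω m y * R (a, m) (b, x)) * X (x, y) (c, d) := by
  simp [Om23, M12, M23, Matrix.mul_apply, Fintype.sum_prod_type]

lemma M12_mul_M23_mul_Sg12_apply (σm : ι → ι → ℂ) (R X : Matrix (ι × ι) (ι × ι) ℂ)
    (a b c d : ι) :
    (M12 X * M23 R * Sg12 σm) (a, b, c) d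
      = ∑ x, ∑ y, (∑ m, X (a, b) (x, m) * R (m, c) (y, d)) * σm x y := by
  simp [Sg12, M12, M23, Matrix.mul_apply, Fintype.sum_prod_type]

lemma rotHead_mul_apply (ω σm : ι → ι → ℂ) (F : ℂ → Matrix (ι × ι) (ι × ι) ℂ) (lam u : ℂ)
    (X : Matrix (ι × ι) (ι × ι) ℂ) (p q : ι × ι) :
    (rotHead ω σm F lam u * X) p q
      = ∑ b, σm p.1 b * (Om23 ω * M12 (F (lam - u)) * M23 X) p.2 (b, q.1, q.2) := by
  simp_rw [Om23_mul_M12_mul_M23_apply]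
  simp only [rotHead, Matrix.mul_apply, Fintype.sum_prod_type, Finset.mul_sum, Finset.sum_mul]
  conv_rhs => rw [Finset.sum_comm]; enter [2, x]; rw [Finset.sum_comm]
  refine Finset.sum_congr rfl fun x _ => Finset.sum_congr rfl fun y _ =>
    Finset.sum_congr rfl fun b _ => Finset.sum_congr rfl fun m _ => by ring

lemma mul_rotHead_apply (ω σm : ι → ι → ℂ) (F : ℂ → Matrix (ι × ι) (ι × ι) ℂ) (lam u : ℂ)
    (X : Matrix (ι × ι) (ι × ι) ℂ) (p q : ι × ι) :
    (X * rotHead ω σm F lam u) p q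
      = ∑ n, (M12 X * M23 (F (lam - u)) * Sg12 σm) (p.1, p.2, n) q.1 * ω n q.2 := by
  simp_rw [M12_mul_M23_mul_Sg12_apply]
  simp only [rotHead, Matrix.mul_apply, Fintype.sum_prod_type, Finset.mul_sum, Finset.sum_mul]
  conv_rhs =>
    rw [Finset.sum_comm]; enter [2, x]; rw [Finset.sum_comm]; enter [2, y]; rw [Finset.sum_comm]
  conv_lhs => enter [2, x]; rw [Finset.sum_comm]
  refine Finset.sum_congr rfl fun x _ => Finset.sum_congr rfl fun b _ =>
    Finset.sum_congr rfl fun m _ => Finset.sum_congr rfl fun n _ => by ring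

lemma rotHead_mul_eq_smul_one {ω σm : ι → ι → ℂ} {F : ℂ → Matrix (ι × ι) (ι × ι) ℂ}
    {lam u a : ℂ} {X : Matrix (ι × ι) (ι × ι) ℂ}
    (hzig : ∀ a c, (∑ b, σm a b * ω b c) = if a = c then (1 : ℂ) else 0)
    (h : Om23 ω * M12 (F (lam - u)) * M23 X = a • Om12 ω) :
    rotHead ω σm F lam u * X = a • 1 := by
  ext ⟨p₁, p₂⟩ ⟨q₁, q₂⟩
  simp only [rotHead_mul_apply, h, Matrix.smul_apply, Om12, Matrix.one_apply, smul_eq_mul]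
  calc ∑ b, σm p₁ b * (a * (ω b q₁ * if p₂ = q₂ then 1 else 0))
      = a * (if p₂ = q₂ then 1 else 0) * ∑ b, σm p₁ b * ω b q₁ := by
        rw [Finset.mul_sum]
        exact Finset.sum_congr rfl fun _ _ => by ring
    _ = a * if (p₁, p₂) = (q₁, q₂) then 1 else 0 := by
        rw [hzig]
        split_ifs <;> simp_all

lemma mul_rotHead_eq_smul_one {ω σm : ι → ι → ℂ} {F : ℂ → Matrix (ι × ι) (ι × ι) ℂ}
    {lam u a : ℂ} {X : Matrix (ι × ι) (ι × ι) ℂ}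
    (hzig : ∀ a c, (∑ b, σm a b * ω b c) = if a = c then (1 : ℂ) else 0)
    (h : M12 X * M23 (F (lam - u)) * Sg12 σm = a • Sg23 σm) :
    X * rotHead ω σm F lam u = a • 1 := by
  ext ⟨p₁, p₂⟩ ⟨q₁, q₂⟩
  simp only [mul_rotHead_apply, h, Matrix.smul_apply, Sg23, Matrix.one_apply, smul_eq_mul]
  calc ∑ n, a * ((if p₁ = q₁ then 1 else 0) * σm p₂ n) * ω n q₂
      = a * (if p₁ = q₁ then 1 else 0) * ∑ n, σm p₂ n * ω n q₂ := by
        rw [Finset.mul_sum]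
        exact Finset.sum_congr rfl fun _ _ => by ring
    _ = a * if (p₁, p₂) = (q₁, q₂) then 1 else 0 := by
        rw [hzig]
        split_ifs <;> simp_all

theorem inversion_identities_general
    (Rm : ℂ → Matrix (ι × ι) (ι × ι) ℂ)
    (ω σm ωs σs : ι → ι → ℂ) (lam : ℂ) (α : ℂ → ℂ)
    -- ω nondegenerate with dual σ
    (hzig1 : ∀ a c, (∑ b, σm a b * ω b c) = if a = c then (1 : ℂ) else 0)
    -- exceptional set of non-generic parameters
    (E : Set ℂ) (hE : E.Countable)
    -- crossing symmetry (general linear form):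
    -- ω^{(23)} Ř_VV^{(12)}(u+λ) Ř_{V*V}^{(23)}(u) = α(u) ω^{(12)}
    (hcross1 : ∀ u : ℂ, u ∉ E → u + lam ∉ E →
      Om23 ω * M12 (Rm (u + lam)) * M23 (RVsV ωs σs Rm lam u) = α u • Om12 ω)
    -- Ř_{V*V}^{(12)}(u) Ř_VV^{(23)}(u+λ) σ^{(12)} = α(u) σ^{(23)}
    (hcross2 : ∀ u : ℂ, u ∉ E → u + lam ∉ E →
      M12 (RVsV ωs σs Rm lam u) * M23 (Rm (u + lam)) * Sg12 σm = α u • Sg23 σm) :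
    ∃ E' : Set ℂ, E'.Countable ∧
      ∀ u ∉ E',
        RVVs ω σm Rm lam (-u) * RVsV ωs σs Rm lam u = α u • (1 : Matrix (ι × ι) (ι × ι) ℂ)
        ∧ RVsV ωs σs Rm lam u * RVVs ω σm Rm lam (-u)
            = α u • (1 : Matrix (ι × ι) (ι × ι) ℂ) := by
  refine ⟨E ∪ (· + lam) ⁻¹' E, hE.union (hE.preimage (add_left_injective lam)), fun u hu => ?_⟩
  obtain ⟨hu, hu_lam⟩ : u ∉ E ∧ u + lam ∉ E := by simpa [not_or] using hu
  have hshift : lam - -u = u + lam := by ring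
  exact ⟨rotHead_mul_eq_smul_one hzig1 (hshift ▸ hcross1 u hu hu_lam),
    mul_rotHead_eq_smul_one hzig1 (hshift ▸ hcross2 u hu hu_lam)⟩

/-- inversion identities:  in the general linear rotation setting, if
the R-matrix `Ř_VV(u)` (satisfying the Yang–Baxter equation and the inversion relation)
is crossing symmetric with crossing parameter `λ` and meromorphic function `α`, then
`Ř_{VV*}(−u)Ř_{V*V}(u) = α(u)·Id_{V*⊗V}` and `Ř_{V*V}(u)Ř_{VV*}(−u) = α(u)·Id_{V⊗V*}`
for generic `u`. -/
theorem inversion_identities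
    (deg : ι → Arr C) (Rm : ℂ → Matrix (ι × ι) (ι × ι) ℂ)
    (ω σm ωs σs : ι → ι → ℂ) (G : C → ℂ) (lam : ℂ) (α : ℂ → ℂ)
    -- each `Ř_VV(u)` is a morphism of π-graded vector spaces,
    -- with meromorphic matrix entries; α is meromorphic
    (hRgr : ∀ u, GradedR deg (Rm u))
    (hMero : ∀ p q, MeromorphicOn (fun u => Rm u p q) Set.univ)
    (hαMero : MeromorphicOn α Set.univ)
    -- grading supports of the duality data
    (hωgr : ∀ a b, ω a b ≠ 0 → deg b = deg a)
    (hσgr : ∀ a b, σm a b ≠ 0 → deg b = deg a)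
    (hωsgr : ∀ a b, ωs a b ≠ 0 → deg b = deg a)
    (hσsgr : ∀ a b, σs a b ≠ 0 → deg b = deg a)
    -- ω nondegenerate with dual σ
    (hzig1 : ∀ a c, (∑ b, σm a b * ω b c) = if a = c then (1 : ℂ) else 0)
    (hzig2 : ∀ a c, (∑ b, ω a b * σm b c) = if a = c then (1 : ℂ) else 0)
    -- G with values in ℂ^×, defining ω*
    (hG : ∀ x, G x ≠ 0)
    (hωs : ∀ a b, ωs a b = G (src (deg a)) / G (tgt (deg a)) * ω b a)
    -- σ* dual to ω*
    (hzig3 : ∀ a c, (∑ b, σs a b * ωs b c) = if a = c then (1 : ℂ) else 0)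
    (hzig4 : ∀ a c, (∑ b, ωs a b * σs b c) = if a = c then (1 : ℂ) else 0)
    -- exceptional set of non-generic parameters
    (E : Set ℂ) (hE : E.Countable)
    -- `Ř_VV` satisfies the Yang–Baxter equation and the inversion relation
    (hYBE : ∀ u v : ℂ, u ∉ E → v ∉ E → u - v ∉ E →
      M23 (Rm (u - v)) * M12 (Rm u) * M23 (Rm v)
        = M12 (Rm v) * M23 (Rm u) * M12 (Rm (u - v)))
    (hinv : ∀ u : ℂ, u ∉ E → -u ∉ E → Rm u * Rm (-u) = 1)
    -- crossing symmetry (general linear form):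
    -- ω^{(23)} Ř_VV^{(12)}(u+λ) Ř_{V*V}^{(23)}(u) = α(u) ω^{(12)}
    (hcross1 : ∀ u : ℂ, u ∉ E → u + lam ∉ E →
      Om23 ω * M12 (Rm (u + lam)) * M23 (RVsV ωs σs Rm lam u) = α u • Om12 ω)
    -- Ř_{V*V}^{(12)}(u) Ř_VV^{(23)}(u+λ) σ^{(12)} = α(u) σ^{(23)}
    (hcross2 : ∀ u : ℂ, u ∉ E → u + lam ∉ E →
      M12 (RVsV ωs σs Rm lam u) * M23 (Rm (u + lam)) * Sg12 σm = α u • Sg23 σm) :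
    ∃ E' : Set ℂ, E'.Countable ∧
      ∀ u ∉ E',
        RVVs ω σm Rm lam (-u) * RVsV ωs σs Rm lam u = α u • (1 : Matrix (ι × ι) (ι × ι) ℂ)
        ∧ RVsV ωs σs Rm lam u * RVVs ω σm Rm lam (-u)
            = α u • (1 : Matrix (ι × ι) (ι × ι) ℂ) :=
  inversion_identities_general Rm ω σm ωs σs lam α hzig1 E hE hcross1 hcross2

end Stmt5
end

section
/- Let π be a finite groupoid, Γ = π², A a Γ-graded Hopf algebra over ℂ, and γ: π → ℂ^× a morphism of groupoids (i.e. γ(i∘j) = γ(i)γ(j) for composable arrows and γ = 1 on identity arrows). Then the map D_γ which acts on the homogeneous component A_α, for a commutative square α with left vertical arrow s•(α) and right vertical arrow t•(α), as multiplication by the scalar γ(s•(α))/γ(t•(α)), is a Hopf algebra automorphism of A: it is bijective, it is an algebra automorphism (D_γ(a·b) = D_γ(a)·D_γ(b), D_γ∘η = η), a coalgebra automorphism (Δ∘D_γ = (D_γ⊗D_γ)∘Δ, ε∘D_γ = ε), and it commutes with the antipode S. -/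
open CategoryTheory
open scoped BigOperators TensorProduct

noncomputable section

namespace Stmt14

variable (C : Type) [Groupoid C] [Fintype C] [DecidableEq C]
  [∀ a b : C, Fintype (a ⟶ b)] [∀ a b : C, DecidableEq (a ⟶ b)]

/-- The set of arrows of the groupoid `C`. -/
abbrev Arr := Σ a b : C, a ⟶ b

variable {C}

def src (α : Arr C) : C := α.1
def tgt (α : Arr C) : C := α.2.1
/-- the inverse arrow -/
def ainv (α : Arr C) : Arr C := ⟨α.2.1, α.1, Groupoid.inv α.2.2⟩
/-- the identity arrow at an object -/
def idArr (a : C) : Arr C := ⟨a, a, 𝟙 a⟩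
/-- an arrow is an identity -/
def isId (α : Arr C) : Prop := ∃ a : C, α = idArr a
/-- composition of composable arrows -/
def acomp (α β : Arr C) (h : tgt α = src β) : Arr C :=
  ⟨src α, tgt β, α.2.2 ≫ eqToHom h ≫ β.2.2⟩

variable (C)

/-- 2-cells of the double groupoid `Γ = π²`, encoded as quadruples
`(top, bottom, left, right)` of arrows; the genuine 2-cells are the commutative
squares, singled out by `IsSq`. -/
abbrev Q := Arr C × Arr C × Arr C × Arr C

variable {C}

def qtop (q : Q C) : Arr C := q.1
def qbot (q : Q C) : Arr C := q.2.1
def qleft (q : Q C) : Arr C := q.2.2.1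
def qright (q : Q C) : Arr C := q.2.2.2

/-- `q` is a commutative square: `right ∘ top = bot ∘ left` with matching endpoints. -/
def IsSq (q : Q C) : Prop :=
  ∃ (h₁ : tgt (qtop q) = src (qright q)) (h₂ : tgt (qleft q) = src (qbot q)),
    src (qtop q) = src (qleft q) ∧ tgt (qright q) = tgt (qbot q) ∧
      acomp (qtop q) (qright q) h₁ = acomp (qleft q) (qbot q) h₂

/-- horizontal composition of 2-cells: `q` is the composite of `q₁` (left) and `q₂`
(right), glued along `q₁.right = q₂.left`. -/
def HComp (q₁ q₂ q : Q C) : Prop :=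
  qright q₁ = qleft q₂ ∧ qleft q = qleft q₁ ∧ qright q = qright q₂ ∧
    (∃ h, acomp (qtop q₁) (qtop q₂) h = qtop q) ∧
    (∃ h, acomp (qbot q₁) (qbot q₂) h = qbot q)

/-- vertical composition of 2-cells: `q` is the composite of `q₁` (above) and `q₂`
(below), glued along `q₁.bot = q₂.top`. -/
def VComp (q₁ q₂ q : Q C) : Prop :=
  qbot q₁ = qtop q₂ ∧ qtop q = qtop q₁ ∧ qbot q = qbot q₂ ∧
    (∃ h, acomp (qleft q₁) (qleft q₂) h = qleft q) ∧
    (∃ h, acomp (qright q₁) (qright q₂) h = qright q)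

/-- the vertical identity 2-cell `id∘_f` on a horizontal arrow `f`. -/
def idVSq (f : Arr C) : Q C := (f, f, idArr (src f), idArr (tgt f))

/-- the horizontal identity 2-cell `id•_u` on a vertical arrow `u`. -/
def idHSq (u : Arr C) : Q C := (idArr (src u), idArr (tgt u), u, u)

/-- the double inverse `ι` of a 2-cell. -/
def dinv (q : Q C) : Q C := (ainv (qbot q), ainv (qtop q), ainv (qright q), ainv (qleft q))

variable (C)

open scoped Classical in
/-- A `π²`-graded Hopf algebra over `ℂ`: a `Γ = π²`-graded vector space `A` (grading
encoded by a complete system of projections `P q` onto the homogeneous components,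
supported on commutative squares), with a product `∇` (graded by vertical composition),
unit `η : I_v → A` (encoded by its components `one f`), coproduct `Δ : A → A ⊗_h A`
(graded by horizontal composition), counit `ε : A → I_h` (encoded by its components
`counit u`), and antipode `S : A → A^{op}`, satisfying the axioms (H1)–(H7). -/
structure GradedHopf where
  /-- the underlying vector space -/
  A : Type
  [acg : AddCommGroup A]
  [mod : Module ℂ A]
  /-- the projection onto the homogeneous component of degree `q` -/
  P : Q C → A →ₗ[ℂ] A
  P_supp : ∀ q, ¬ IsSq q → P q = 0
  P_idem : ∀ q, (P q).comp (P q) = P q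
  P_orth : ∀ q q', q ≠ q' → (P q).comp (P q') = 0
  P_total : ∀ x : A, (∑ q : Q C, P q x) = x
  /-- the product `∇ : A ⊗_v A → A` -/
  mul : A →ₗ[ℂ] A →ₗ[ℂ] A
  /-- the components `η(1) ∈ A_{id∘_f}` of the unit `η : I_v → A` -/
  one : Arr C → A
  /-- the coproduct `Δ : A → A ⊗_h A` -/
  comul : A →ₗ[ℂ] A ⊗[ℂ] A
  /-- the components `ε_u : A → (I_h)_{id•_u} = ℂ` of the counit -/
  counit : Arr C → A →ₗ[ℂ] ℂ
  /-- the antipode -/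
  S : A →ₗ[ℂ] A
  -- gradings of the structure maps
  mul_graded : ∀ q₁ q₂ q (x y : A), ¬ VComp q₁ q₂ q → P q (mul (P q₁ x) (P q₂ y)) = 0
  one_graded : ∀ f : Arr C, P (idVSq f) (one f) = one f
  comul_graded : ∀ q₁ q₂ q (x : A), ¬ HComp q₁ q₂ q →
    TensorProduct.map (P q₁) (P q₂) (comul (P q x)) = 0
  counit_graded : ∀ (u : Arr C) (q : Q C) (x : A), q ≠ idHSq u → counit u (P q x) = 0
  S_graded : ∀ (q : Q C) (x : A), S (P q x) = P (dinv q) (S x)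
  -- (H1): (A, ∇, η) is a unital algebra for the vertical monoidal structure
  mul_assoc : ∀ x y z : A, mul (mul x y) z = mul x (mul y z)
  one_mul : ∀ x : A, mul (∑ f : Arr C, one f) x = x
  mul_one : ∀ x : A, mul x (∑ f : Arr C, one f) = x
  -- (H2): (A, Δ, ε) is a counital coalgebra for the horizontal monoidal structure
  coassoc : ∀ x : A,
    (TensorProduct.assoc ℂ A A A) (TensorProduct.map comul LinearMap.id (comul x))
      = TensorProduct.map LinearMap.id comul (comul x)
  counit_comul_left : ∀ x : A,
    TensorProduct.lift ((LinearMap.lsmul ℂ A).comp (∑ u : Arr C, counit u)) (comul x) = x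
  counit_comul_right : ∀ x : A,
    TensorProduct.lift (((LinearMap.lsmul ℂ A).comp (∑ u : Arr C, counit u)).flip)
      (comul x) = x
  -- (H3): compatibility of the product and the coproduct
  comul_mul : ∀ x y : A,
    comul (mul x y)
      = TensorProduct.map (TensorProduct.lift mul) (TensorProduct.lift mul)
          (TensorProduct.tensorTensorTensorComm ℂ A A A A (comul x ⊗ₜ comul y))
  -- (H4): Δ∘η = (η⊗η)∘Δ_{I_v} and ε∘∇ = ∇_{I_h}∘(ε⊗ε)
  comul_one : ∀ f : Arr C,
    comul (one f)
      = ∑ p ∈ Finset.univ.filter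
          (fun p : Arr C × Arr C => ∃ h : tgt p.1 = src p.2, acomp p.1 p.2 h = f),
          one p.1 ⊗ₜ[ℂ] one p.2
  counit_mul : ∀ (w : Arr C) (x y : A),
    counit w (mul x y)
      = ∑ p ∈ Finset.univ.filter
          (fun p : Arr C × Arr C => ∃ h : tgt p.1 = src p.2, acomp p.1 p.2 h = w),
          counit p.1 x * counit p.2 y
  -- (H5): ε∘η = σ
  counit_one : ∀ u f : Arr C, counit u (one f) = if u = f ∧ isId f then 1 else 0
  -- (H6): S is an algebra isomorphism onto the opposite algebra
  S_bij : Function.Bijective S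
  S_antimul : ∀ x y : A, S (mul x y) = mul (S y) (S x)
  S_one : S (∑ f : Arr C, one f) = ∑ f : Arr C, one f
  -- (H7): the antipode axioms ∇∘p∘(S⊗id)∘i∘Δ = η∘σ'∘ε = ∇∘p∘(id⊗S)∘i∘Δ,
  -- where p : A⊗A → A⊗_v A is the projection onto the components with matching
  -- horizontal arrows
  antipode_left : ∀ x : A,
    TensorProduct.lift mul
      ((∑ p ∈ Finset.univ.filter (fun p : Q C × Q C => qbot p.1 = qtop p.2),
          TensorProduct.map (P p.1) (P p.2))
        (TensorProduct.map S LinearMap.id (comul x)))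
      = ∑ a : C, counit (idArr a) x • one (idArr a)
  antipode_right : ∀ x : A,
    TensorProduct.lift mul
      ((∑ p ∈ Finset.univ.filter (fun p : Q C × Q C => qbot p.1 = qtop p.2),
          TensorProduct.map (P p.1) (P p.2))
        (TensorProduct.map LinearMap.id S (comul x)))
      = ∑ a : C, counit (idArr a) x • one (idArr a)

attribute [instance] GradedHopf.acg GradedHopf.mod

variable {C}

/-- the grading automorphism `D_γ`: multiplication by `γ(s•(α))/γ(t•(α))` on the
homogeneous component of a 2-cell `α` with left vertical arrow `s•(α)` and right
vertical arrow `t•(α)`. -/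
def Dgamma (H : GradedHopf C) (γ : Arr C → ℂ) : H.A →ₗ[ℂ] H.A :=
  ∑ q : Q C, (γ (qleft q) / γ (qright q)) • H.P q

/-! ### Auxiliary lemmas -/

/-- the scalar by which `D_γ` acts on the homogeneous component of degree `q` -/
def cq (γ : Arr C → ℂ) (q : Q C) : ℂ := γ (qleft q) / γ (qright q)

lemma Dgamma_apply (H : GradedHopf C) (γ : Arr C → ℂ) (x : H.A) :
    Dgamma H γ x = ∑ q : Q C, cq γ q • H.P q x := by
  simp [Dgamma, cq]

lemma P_P (H : GradedHopf C) (q q' : Q C) (x : H.A) :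
    H.P q (H.P q' x) = if q = q' then H.P q x else 0 := by
  split_ifs with h
  · subst h; exact LinearMap.ext_iff.mp (H.P_idem q) x
  · simpa using LinearMap.ext_iff.mp (H.P_orth q q' h) x

lemma P_Dgamma (H : GradedHopf C) (γ : Arr C → ℂ) (q : Q C) (x : H.A) :
    H.P q (Dgamma H γ x) = cq γ q • H.P q x := by
  rw [Dgamma_apply, map_sum]
  rw [Finset.sum_eq_single q]
  · rw [map_smul, P_P]; simp
  · intro q' _ h
    rw [map_smul, P_P]
    simp [Ne.symm h]
  · simp

lemma Dgamma_P (H : GradedHopf C) (γ : Arr C → ℂ) (q : Q C) (x : H.A) :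
    Dgamma H γ (H.P q x) = cq γ q • H.P q x := by
  rw [Dgamma_apply]
  rw [Finset.sum_eq_single q]
  · rw [P_P]; simp
  · intro q' _ h
    rw [P_P]
    simp [h]
  · simp

lemma acomp_ainv (α : Arr C) : acomp α (ainv α) rfl = idArr (src α) := by
  simp [acomp, ainv, idArr, src, tgt]

lemma ainv_ainv (α : Arr C) : ainv (ainv α) = α := by
  rcases α with ⟨a, b, f⟩
  simp [ainv]

lemma dinv_dinv (q : Q C) : dinv (dinv q) = q := by
  rcases q with ⟨t, b, l, r⟩
  simp [dinv, qtop, qbot, qleft, qright, ainv_ainv]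

section Gamma

variable {γ : Arr C → ℂ}

lemma gamma_ainv (hγ0 : ∀ i : Arr C, γ i ≠ 0)
    (hγmul : ∀ (i j : Arr C) (h : tgt i = src j), γ (acomp i j h) = γ i * γ j)
    (hγone : ∀ a : C, γ (idArr a) = 1) (α : Arr C) :
    γ (ainv α) = (γ α)⁻¹ := by
  have h := hγmul α (ainv α) rfl
  rw [acomp_ainv, hγone] at h
  exact eq_inv_of_mul_eq_one_right h.symm

lemma cq_dinv (hγ0 : ∀ i : Arr C, γ i ≠ 0)
    (hγmul : ∀ (i j : Arr C) (h : tgt i = src j), γ (acomp i j h) = γ i * γ j)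
    (hγone : ∀ a : C, γ (idArr a) = 1) (q : Q C) :
    cq γ (dinv q) = cq γ q := by
  rcases q with ⟨t, b, l, r⟩
  simp only [cq, dinv, qleft, qright]
  rw [gamma_ainv hγ0 hγmul hγone, gamma_ainv hγ0 hγmul hγone, inv_div_inv]

end Gamma

lemma sum_mapPP (H : GradedHopf C) (z : H.A ⊗[ℂ] H.A) :
    ∑ q₁ : Q C, ∑ q₂ : Q C, TensorProduct.map (H.P q₁) (H.P q₂) z = z := by
  have key : (∑ q₁ : Q C, ∑ q₂ : Q C, TensorProduct.map (H.P q₁) (H.P q₂))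
      = (LinearMap.id : H.A ⊗[ℂ] H.A →ₗ[ℂ] H.A ⊗[ℂ] H.A) := by
    apply TensorProduct.ext'
    intro a b
    simp only [LinearMap.sum_apply, TensorProduct.map_tmul, LinearMap.id_apply]
    calc ∑ q₁ : Q C, ∑ q₂ : Q C, H.P q₁ a ⊗ₜ[ℂ] H.P q₂ b
        = ∑ q₁ : Q C, H.P q₁ a ⊗ₜ[ℂ] b := by
          refine Finset.sum_congr rfl fun q₁ _ => ?_
          rw [← TensorProduct.tmul_sum, H.P_total]
      _ = a ⊗ₜ[ℂ] b := by rw [← TensorProduct.sum_tmul, H.P_total]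
  calc ∑ q₁ : Q C, ∑ q₂ : Q C, TensorProduct.map (H.P q₁) (H.P q₂) z
      = (∑ q₁ : Q C, ∑ q₂ : Q C, TensorProduct.map (H.P q₁) (H.P q₂)) z := by
        simp [LinearMap.sum_apply]
    _ = z := by rw [key]; rfl

lemma mapDD (H : GradedHopf C) (γ : Arr C → ℂ) (z : H.A ⊗[ℂ] H.A) :
    TensorProduct.map (Dgamma H γ) (Dgamma H γ) z
      = ∑ q₁ : Q C, ∑ q₂ : Q C, (cq γ q₁ * cq γ q₂) •
          TensorProduct.map (H.P q₁) (H.P q₂) z := by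
  have key : TensorProduct.map (Dgamma H γ) (Dgamma H γ)
      = ∑ q₁ : Q C, ∑ q₂ : Q C, (cq γ q₁ * cq γ q₂) •
          TensorProduct.map (H.P q₁) (H.P q₂) := by
    apply TensorProduct.ext'
    intro a b
    simp only [LinearMap.sum_apply, LinearMap.smul_apply, TensorProduct.map_tmul]
    rw [Dgamma_apply, Dgamma_apply, TensorProduct.sum_tmul]
    refine Finset.sum_congr rfl fun q₁ _ => ?_
    rw [← TensorProduct.smul_tmul', TensorProduct.tmul_sum, Finset.smul_sum]
    refine Finset.sum_congr rfl fun q₂ _ => ?_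
    rw [TensorProduct.tmul_smul, smul_smul]
  calc TensorProduct.map (Dgamma H γ) (Dgamma H γ) z
      = (∑ q₁ : Q C, ∑ q₂ : Q C, (cq γ q₁ * cq γ q₂) •
          TensorProduct.map (H.P q₁) (H.P q₂)) z := by rw [key]
    _ = _ := by simp [LinearMap.sum_apply]

/-- Let `π` be a finite groupoid, `Γ = π²`, `A` a `Γ`-graded Hopf
algebra over `ℂ`, and `γ : π → ℂ^×` a morphism of groupoids.  Then `D_γ` is a Hopf
algebra automorphism of `A`: it is bijective, an algebra automorphism, a coalgebra
automorphism, and it commutes with the antipode. -/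
theorem Dgamma_is_Hopf_automorphism
    (H : GradedHopf C) (γ : Arr C → ℂ)
    (hγ0 : ∀ i : Arr C, γ i ≠ 0)
    (hγmul : ∀ (i j : Arr C) (h : tgt i = src j), γ (acomp i j h) = γ i * γ j)
    (hγone : ∀ a : C, γ (idArr a) = 1) :
    Function.Bijective (Dgamma H γ) ∧
    (∀ x y : H.A, Dgamma H γ (H.mul x y) = H.mul (Dgamma H γ x) (Dgamma H γ y)) ∧
    (∀ f : Arr C, Dgamma H γ (H.one f) = H.one f) ∧
    (∀ x : H.A, H.comul (Dgamma H γ x)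
        = TensorProduct.map (Dgamma H γ) (Dgamma H γ) (H.comul x)) ∧
    (∀ (u : Arr C) (x : H.A), H.counit u (Dgamma H γ x) = H.counit u x) ∧
    (∀ x : H.A, Dgamma H γ (H.S x) = H.S (Dgamma H γ x)) := by
  have hne : ∀ q : Q C, cq γ q ≠ 0 := fun q => div_ne_zero (hγ0 _) (hγ0 _)
  refine ⟨?_, ?_, ?_, ?_, ?_, ?_⟩
  · -- bijectivity
    set E : H.A →ₗ[ℂ] H.A := ∑ q : Q C, (cq γ q)⁻¹ • H.P q with hEdef
    have hEapply : ∀ x : H.A, E x = ∑ q : Q C, (cq γ q)⁻¹ • H.P q x := by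
      intro x; simp [hEdef]
    have h1 : ∀ x, E (Dgamma H γ x) = x := by
      intro x
      rw [hEapply]
      have key : ∀ q : Q C, (cq γ q)⁻¹ • H.P q (Dgamma H γ x) = H.P q x := by
        intro q; rw [P_Dgamma, inv_smul_smul₀ (hne q)]
      rw [Finset.sum_congr rfl fun q _ => key q, H.P_total]
    have h2 : ∀ x, Dgamma H γ (E x) = x := by
      intro x
      rw [hEapply, map_sum]
      have key : ∀ q : Q C, Dgamma H γ ((cq γ q)⁻¹ • H.P q x) = H.P q x := by
        intro q; rw [map_smul, Dgamma_P, smul_smul, inv_mul_cancel₀ (hne q), one_smul]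
      rw [Finset.sum_congr rfl fun q _ => key q, H.P_total]
    exact Function.bijective_iff_has_inverse.mpr ⟨E, h1, h2⟩
  · -- multiplicativity
    intro x y
    have key_mul : ∀ q₁ q₂ : Q C,
        Dgamma H γ (H.mul (H.P q₁ x) (H.P q₂ y))
          = (cq γ q₁ * cq γ q₂) • H.mul (H.P q₁ x) (H.P q₂ y) := by
      intro q₁ q₂
      rw [Dgamma_apply]
      have step : ∀ q : Q C, cq γ q • H.P q (H.mul (H.P q₁ x) (H.P q₂ y))
          = (cq γ q₁ * cq γ q₂) • H.P q (H.mul (H.P q₁ x) (H.P q₂ y)) := by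
        intro q
        by_cases hv : VComp q₁ q₂ q
        · congr 1
          obtain ⟨_, _, _, ⟨hl, el⟩, ⟨hr, er⟩⟩ := hv
          rw [cq, cq, cq, ← el, ← er, hγmul, hγmul, div_mul_div_comm]
        · rw [H.mul_graded q₁ q₂ q x y hv, smul_zero, smul_zero]
      rw [Finset.sum_congr rfl fun q _ => step q, ← Finset.smul_sum, H.P_total]
    calc Dgamma H γ (H.mul x y)
        = ∑ q₁ : Q C, ∑ q₂ : Q C, Dgamma H γ (H.mul (H.P q₁ x) (H.P q₂ y)) := by
          conv_lhs => rw [← H.P_total x, ← H.P_total y]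
          simp only [map_sum, LinearMap.sum_apply]
          rw [Finset.sum_comm]
      _ = ∑ q₁ : Q C, ∑ q₂ : Q C,
            (cq γ q₁ * cq γ q₂) • H.mul (H.P q₁ x) (H.P q₂ y) := by
          exact Finset.sum_congr rfl fun q₁ _ =>
            Finset.sum_congr rfl fun q₂ _ => key_mul q₁ q₂
      _ = H.mul (Dgamma H γ x) (Dgamma H γ y) := by
          rw [Dgamma_apply, Dgamma_apply]
          simp only [map_sum, LinearMap.sum_apply, map_smul, LinearMap.smul_apply,
            Finset.smul_sum, smul_smul]
          rw [Finset.sum_comm]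
          exact Finset.sum_congr rfl fun q₁ _ => Finset.sum_congr rfl fun q₂ _ => by
            rw [mul_comm]
  · -- unit
    intro f
    rw [← H.one_graded f, Dgamma_P, H.one_graded]
    have : cq γ (idVSq f) = 1 := by
      simp [cq, idVSq, qleft, qright, hγone]
    rw [this, one_smul]
  · -- comultiplication
    intro x
    have key_comul : ∀ q : Q C,
        TensorProduct.map (Dgamma H γ) (Dgamma H γ) (H.comul (H.P q x))
          = cq γ q • H.comul (H.P q x) := by
      intro q
      rw [mapDD]
      have step : ∀ q₁ q₂ : Q C,
          (cq γ q₁ * cq γ q₂) • TensorProduct.map (H.P q₁) (H.P q₂) (H.comul (H.P q x))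
            = cq γ q • TensorProduct.map (H.P q₁) (H.P q₂) (H.comul (H.P q x)) := by
        intro q₁ q₂
        by_cases hh : HComp q₁ q₂ q
        · congr 1
          obtain ⟨h1, h2, h3, _, _⟩ := hh
          rw [cq, cq, cq, h2, h3, h1, div_mul_div_comm,
            mul_comm (γ (qleft q₁)), mul_div_mul_left _ _ (hγ0 _)]
        · rw [H.comul_graded q₁ q₂ q x hh, smul_zero, smul_zero]
      rw [Finset.sum_congr rfl fun q₁ _ => Finset.sum_congr rfl fun q₂ _ => step q₁ q₂]
      simp only [← Finset.smul_sum]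
      rw [sum_mapPP]
    conv_rhs => rw [← H.P_total x]
    rw [map_sum, map_sum, Dgamma_apply, map_sum]
    simp only [map_smul]
    exact Finset.sum_congr rfl fun q _ => (key_comul q).symm
  · -- counit
    intro u x
    conv_rhs => rw [← H.P_total x]
    rw [Dgamma_apply, map_sum, map_sum]
    refine Finset.sum_congr rfl fun q _ => ?_
    rw [map_smul]
    by_cases h : q = idHSq u
    · subst h
      have : cq γ (idHSq u) = 1 := by
        simp [cq, idHSq, qleft, qright, div_self (hγ0 u)]
      rw [this, one_smul]
    · rw [H.counit_graded u q x h, smul_zero]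
  · -- antipode
    intro x
    rw [Dgamma_apply, Dgamma_apply, map_sum]
    simp only [map_smul, H.S_graded]
    have hdinv : Function.Involutive (dinv : Q C → Q C) := dinv_dinv
    have step : ∀ q : Q C, cq γ q • H.P (dinv q) (H.S x)
        = cq γ (dinv q) • H.P (dinv q) (H.S x) := by
      intro q; rw [cq_dinv hγ0 hγmul hγone]
    rw [show (∑ q : Q C, cq γ q • H.P (dinv q) (H.S x))
        = ∑ q : Q C, cq γ (dinv q) • H.P (dinv q) (H.S x) from
      Finset.sum_congr rfl fun q _ => step q]
    exact (Equiv.sum_comp (hdinv.toPerm dinv)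
      (fun q => cq γ q • H.P q (H.S x))).symm

end Stmt14
end
end
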